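/- arXiv:1109.3273 — 4 statements merged into one kernel-verified Lean document; each statement's English description precedes it below -/
import Mathlib

section
/- Let g(x,y) = Σ_{n≥0} Σ_{p≥0} c(n,p) x^n y^p ∈ ℚ[[x,y]]. Then (2x²·g(x,y) - (1 - x + x³ - x³y))² = (1 - 3x + x³ - x³y)·(1 + x + x³ - x³y) as formal power series in ℚ[[x,y]]. -/
/-- Steps of a Motzkin path: up, horizontal, down. -/
inductive Step : Type
  | U | H | D
  deriving DecidableEq

/-- A list of steps is a Motzkin path if every prefix has at least as many
up steps as down steps, and the total numbers of up and down steps agree. -/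
def IsMotzkin (l : List Step) : Prop :=
  (∀ k : ℕ, (l.take k).count Step.D ≤ (l.take k).count Step.U) ∧
    l.count Step.U = l.count Step.D

/-- The number of plateaus (occurrences of consecutive steps U, H, D) in a path. -/
def plateauCount (l : List Step) : ℕ :=
  ((Finset.range l.length).filter
    (fun i => (l.drop i).take 3 = [Step.U, Step.H, Step.D])).card

/-- `c n p` is the number of Motzkin paths of length `n` with exactly `p`
plateaus; it is `0` when `n < 0` or `p < 0`. -/
noncomputable def c (n p : ℤ) : ℕ :=
  if 0 ≤ n ∧ 0 ≤ p then
    Nat.card {l : List Step // l.length = n.toNat ∧ IsMotzkin l ∧ plateauCount l = p.toNat}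
  else 0

namespace MZ

@[simp] lemma count_UU (t : List Step) : (Step.U :: t).count Step.U = t.count Step.U + 1 := by
  simp [List.count_cons]
@[simp] lemma count_UD (t : List Step) : (Step.U :: t).count Step.D = t.count Step.D := by
  simp [List.count_cons]
@[simp] lemma count_HU (t : List Step) : (Step.H :: t).count Step.U = t.count Step.U := by
  simp [List.count_cons]
@[simp] lemma count_HD (t : List Step) : (Step.H :: t).count Step.D = t.count Step.D := by
  simp [List.count_cons]
@[simp] lemma count_DU (t : List Step) : (Step.D :: t).count Step.U = t.count Step.U := by
  simp [List.count_cons]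
@[simp] lemma count_DD (t : List Step) : (Step.D :: t).count Step.D = t.count Step.D + 1 := by
  simp [List.count_cons]

/-- first index at which the running balance (downs minus ups) exceeds `h`. -/
def fr : ℕ → List Step → ℕ
  | _, [] => 0
  | h, (Step.U :: t) => fr (h+1) t + 1
  | h, (Step.H :: t) => fr h t + 1
  | 0, (Step.D :: _) => 0
  | (h+1), (Step.D :: t) => fr h t + 1

@[simp] lemma fr_nil (h : ℕ) : fr h [] = 0 := by cases h <;> rfl
@[simp] lemma fr_U (h : ℕ) (t : List Step) : fr h (Step.U :: t) = fr (h+1) t + 1 := by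
  cases h <;> rfl
@[simp] lemma fr_H (h : ℕ) (t : List Step) : fr h (Step.H :: t) = fr h t + 1 := by
  cases h <;> rfl
@[simp] lemma fr_D0 (t : List Step) : fr 0 (Step.D :: t) = 0 := rfl
@[simp] lemma fr_Dsucc (h : ℕ) (t : List Step) : fr (h+1) (Step.D :: t) = fr h t + 1 := rfl

lemma fr_spec : ∀ (t : List Step) (h : ℕ),
    (∀ k, (t.take k).count Step.D ≤ (t.take k).count Step.U + h + 1) →
    t.count Step.D = t.count Step.U + h + 1 →
    fr h t < t.length ∧
    t.drop (fr h t) = Step.D :: t.drop (fr h t + 1) ∧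
    (t.take (fr h t)).count Step.D = (t.take (fr h t)).count Step.U + h ∧
    (∀ k, k ≤ fr h t → (t.take k).count Step.D ≤ (t.take k).count Step.U + h) := by
  intro t
  induction t with
  | nil => intro h _ htot; simp at htot
  | cons s t ih =>
    intro h hpre htot
    cases s with
    | U =>
      have hpre' : ∀ k, (t.take k).count Step.D ≤ (t.take k).count Step.U + (h+1) + 1 := by
        intro k
        have := hpre (k+1)
        simp at this; omega
      have htot' : t.count Step.D = t.count Step.U + (h+1) + 1 := by simp at htot; omega
      obtain ⟨h1, h2, h3, h4⟩ := ih (h+1) hpre' htot'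
      refine ⟨by simp; omega, by simpa using h2, by
        rw [fr_U]
        simp only [List.take_succ_cons, count_UU, count_UD]
        omega, ?_⟩
      intro k hk
      match k with
      | 0 => simp
      | (k+1) =>
        have : k ≤ fr (h+1) t := by simp at hk; omega
        have := h4 k this
        simp only [List.take_succ_cons, count_UU, count_UD]
        omega
    | H =>
      have hpre' : ∀ k, (t.take k).count Step.D ≤ (t.take k).count Step.U + h + 1 := by
        intro k; have := hpre (k+1); simpa using this
      have htot' : t.count Step.D = t.count Step.U + h + 1 := by simpa using htot
      obtain ⟨h1, h2, h3, h4⟩ := ih h hpre' htot'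
      refine ⟨by simp; omega, by simpa using h2, by simpa using h3, ?_⟩
      intro k hk
      match k with
      | 0 => simp
      | (k+1) =>
        have : k ≤ fr h t := by simp at hk; omega
        have := h4 k this
        simp only [List.take_succ_cons, count_HU, count_HD]
        omega
    | D =>
      cases h with
      | zero =>
        refine ⟨by simp, by simp, by simp, ?_⟩
        intro k hk
        simp at hk
        subst hk
        simp
      | succ h =>
        have hpre' : ∀ k, (t.take k).count Step.D ≤ (t.take k).count Step.U + h + 1 := by
          intro k; have := hpre (k+1); simp at this; omega
        have htot' : t.count Step.D = t.count Step.U + h + 1 := by simp at htot; omega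
        obtain ⟨h1, h2, h3, h4⟩ := ih h hpre' htot'
        refine ⟨by simp; omega, by simpa using h2, ?_, ?_⟩
        · rw [fr_Dsucc]
          simp only [List.take_succ_cons, count_DU, count_DD]
          omega
        intro k hk
        match k with
        | 0 => simp
        | (k+1) =>
          have : k ≤ fr h t := by simp at hk; omega
          have := h4 k this
          simp only [List.take_succ_cons, count_DU, count_DD]
          omega

lemma fr_append : ∀ (m : List Step) (h : ℕ) (m' : List Step),
    (∀ k, (m.take k).count Step.D ≤ (m.take k).count Step.U + h) →
    m.count Step.D = m.count Step.U + h →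
    fr h (m ++ Step.D :: m') = m.length := by
  intro m
  induction m with
  | nil =>
    intro h m' _ htot
    simp at htot
    subst htot
    simp
  | cons s m ih =>
    intro h m' hpre htot
    cases s with
    | U =>
      have := ih (h+1) m' (fun k => by have := hpre (k+1); simp at this; omega)
        (by simp at htot; omega)
      simp [this]
    | H =>
      have := ih h m' (fun k => by have := hpre (k+1); simpa using this)
        (by simpa using htot)
      simp [this]
    | D =>
      have h1 : 1 ≤ h := by have := hpre 1; simpa using this
      cases h with
      | zero => omega
      | succ h =>
        have := ih h m' (fun k => by have := hpre (k+1); simp at this; omega)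
          (by simp at htot; omega)
        simp [this]

lemma isMotzkin_nil : IsMotzkin [] := ⟨fun k => by simp, by simp⟩

lemma isMotzkin_H : IsMotzkin [Step.H] := by
  constructor
  · intro k; cases k <;> simp
  · simp

lemma isMotzkin_cons_H {t : List Step} : IsMotzkin (Step.H :: t) ↔ IsMotzkin t := by
  constructor
  · rintro ⟨h1, h2⟩
    refine ⟨fun k => by have := h1 (k+1); simpa using this, by simpa using h2⟩
  · rintro ⟨h1, h2⟩
    refine ⟨fun k => ?_, by simpa using h2⟩
    cases k with
    | zero => simp
    | succ k => simpa using h1 k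

lemma not_isMotzkin_cons_D {t : List Step} : ¬ IsMotzkin (Step.D :: t) := by
  rintro ⟨h1, _⟩
  have := h1 1
  simp at this

lemma isMotzkin_singleton {s : Step} (h : IsMotzkin [s]) : s = Step.H := by
  cases s
  · exact absurd h.2 (by simp)
  · rfl
  · exact absurd h not_isMotzkin_cons_D

/-- a Motzkin path never ends in `U, H`. -/
lemma motzkin_no_UH {m : List Step} (hm : IsMotzkin m) (r : List Step) :
    m ≠ r ++ [Step.U, Step.H] := by
  intro h
  have h2 := hm.2
  have h1 := hm.1 r.length
  rw [h] at h2 h1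
  simp [List.count_append, List.take_append] at h2 h1
  omega

lemma take2_eq_iff {m : List Step} (m' : List Step) (hm : IsMotzkin m) :
    (m ++ Step.D :: m').take 2 = [Step.H, Step.D] ↔ m = [Step.H] := by
  match m with
  | [] => simp
  | [a] => cases a <;> simp
  | (a :: b :: m1) =>
    have : ¬ (a = Step.H ∧ b = Step.D) := by
      rintro ⟨rfl, rfl⟩
      have := hm.1 2
      simp at this
    constructor
    · intro h
      simp at h
      exact absurd ⟨h.1, h.2⟩ this
    · intro h; simp at h

/-- take-3 characterization matching the plateau predicate head case -/
lemma plateauCount_cons (s : Step) (t : List Step) :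
    plateauCount (s :: t)
      = plateauCount t + (if (s :: t).take 3 = [Step.U, Step.H, Step.D] then 1 else 0) := by
  unfold plateauCount
  rw [Finset.card_filter, Finset.card_filter]
  rw [List.length_cons, Finset.sum_range_succ']
  simp only [List.drop_succ_cons, List.drop_zero]

lemma plateauCount_nil : plateauCount [] = 0 := by simp [plateauCount]

lemma plateau_append {m : List Step} (m' : List Step) (hm : ∀ r, m ≠ r ++ [Step.U, Step.H]) :
    plateauCount (m ++ Step.D :: m') = plateauCount m + plateauCount m' := by
  induction m with
  | nil =>
    rw [List.nil_append, plateauCount_cons, plateauCount_nil]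
    simp
  | cons s m0 ih =>
    have hm0 : ∀ r, m0 ≠ r ++ [Step.U, Step.H] := by
      intro r h
      exact hm (s :: r) (by simp [h])
    rw [List.cons_append, plateauCount_cons, ih hm0, plateauCount_cons]
    have : ((s :: (m0 ++ Step.D :: m')).take 3 = [Step.U, Step.H, Step.D])
        ↔ ((s :: m0).take 3 = [Step.U, Step.H, Step.D]) := by
      match m0 with
      | [] => cases s <;> simp
      | [a] =>
        have : ¬ (s = Step.U ∧ a = Step.H) := by
          rintro ⟨rfl, rfl⟩
          exact hm [] rfl
        simp only [List.singleton_append, List.take_succ_cons, List.take_cons, List.take_nil]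
        constructor
        · intro h; simp at h; exact absurd ⟨h.1, h.2⟩ this
        · intro h; simp at h
      | (a :: b :: m1) => simp
    rw [if_congr this rfl rfl]
    ring
lemma U_decomp {t : List Step} (hm : IsMotzkin (Step.U :: t)) :
    IsMotzkin (t.take (fr 0 t)) ∧ IsMotzkin (t.drop (fr 0 t + 1)) ∧
    fr 0 t < t.length ∧ t = t.take (fr 0 t) ++ Step.D :: t.drop (fr 0 t + 1) := by
  have hpre : ∀ k, (t.take k).count Step.D ≤ (t.take k).count Step.U + 0 + 1 := by
    intro k
    have := hm.1 (k+1)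
    simp at this
    omega
  have htot : t.count Step.D = t.count Step.U + 0 + 1 := by
    have := hm.2; simp at this; omega
  obtain ⟨hj1, hj2, hj3, hj4⟩ := fr_spec t 0 hpre htot
  set j := fr 0 t with hj
  have hA3 : (t.take (j+1)).count Step.D = (t.take j).count Step.D + 1 ∧
      (t.take (j+1)).count Step.U = (t.take j).count Step.U := by
    rw [List.take_add (l := t) (i := j) (j := 1), hj2]
    simp [List.count_append]
  have hrecon : t = t.take j ++ Step.D :: t.drop (j + 1) := by
    conv_lhs => rw [← List.take_append_drop j t]
    rw [hj2]
  refine ⟨⟨?_, by have := hj3; omega⟩, ⟨?_, ?_⟩, hj1, hrecon⟩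
  · intro k
    rw [List.take_take]
    exact by simpa using hj4 (min k j) (min_le_right _ _)
  · intro k
    have hsplit := List.take_add (l := t) (i := j+1) (j := k)
    have hD := congrArg (List.count Step.D) hsplit
    have hU := congrArg (List.count Step.U) hsplit
    rw [List.count_append] at hD hU
    have := hpre (j+1+k)
    omega
  · have hsplit := List.take_append_drop (j+1) t
    have hD := congrArg (List.count Step.D) hsplit
    have hU := congrArg (List.count Step.U) hsplit
    rw [List.count_append] at hD hU
    omega

lemma isMotzkin_U_append {m m' : List Step} (hm : IsMotzkin m) (hm' : IsMotzkin m') :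
    IsMotzkin (Step.U :: m ++ Step.D :: m') := by
  constructor
  · intro k
    cases k with
    | zero => simp
    | succ k =>
      rw [List.cons_append, List.take_succ_cons]
      rw [List.take_append]
      rcases le_or_gt k m.length with hk | hk
      · have : k - m.length = 0 := by omega
        rw [this]
        have := hm.1 k
        simp
        omega
      · have h2 : k - m.length = (k - m.length - 1) + 1 := by omega
        rw [h2, List.take_succ_cons, List.take_of_length_le (by omega)]
        have := hm'.1 (k - m.length - 1)
        have := hm.2
        simp [List.count_append]
        omega
  · have := hm.2; have := hm'.2
    simp [List.count_append]
    omega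

lemma fr_U_append {m : List Step} (m' : List Step) (hm : IsMotzkin m) :
    fr 0 (m ++ Step.D :: m') = m.length :=
  fr_append m 0 m' (fun k => by simpa using hm.1 k) (by have := hm.2; omega)

lemma plateau_U_append {m m' : List Step} (hm : IsMotzkin m) :
    plateauCount (Step.U :: m ++ Step.D :: m')
      = plateauCount m + plateauCount m' + (if m = [Step.H] then 1 else 0) := by
  rw [List.cons_append, plateauCount_cons, plateau_append m' (motzkin_no_UH hm)]
  have : ((Step.U :: (m ++ Step.D :: m')).take 3 = [Step.U, Step.H, Step.D])
      ↔ m = [Step.H] := by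
    rw [List.take_succ_cons]
    rw [← take2_eq_iff m' hm]
    constructor
    · intro h; exact (List.cons_eq_cons.mp h).2
    · intro h; rw [h]
  rw [if_congr this rfl rfl]
def S (n p : ℕ) : Type :=
  {l : List Step // l.length = n ∧ IsMotzkin l ∧ plateauCount l = p}

def TT (n p : ℕ) : Type :=
  {mm : List Step × List Step // mm.1.length + mm.2.length = n ∧ IsMotzkin mm.1 ∧
    IsMotzkin mm.2 ∧
    plateauCount mm.1 + plateauCount mm.2 + (if mm.1 = [Step.H] then 1 else 0) = p}

def PP (n p : ℕ) : Type :=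
  {mm : List Step × List Step // mm.1.length + mm.2.length = n ∧ IsMotzkin mm.1 ∧
    IsMotzkin mm.2 ∧ plateauCount mm.1 + plateauCount mm.2 = p}

def PH (n p : ℕ) : Type :=
  {l : List Step // l.length + 1 = n ∧ IsMotzkin l ∧ plateauCount l = p}

def TH (n p : ℕ) : Type :=
  {l : List Step // l.length + 1 = n ∧ IsMotzkin l ∧ plateauCount l + 1 = p}

instance : Fintype Step :=
  ⟨⟨{Step.U, Step.H, Step.D}, by decide⟩, by intro x; cases x <;> decide⟩

noncomputable instance (n : ℕ) : Finite {l : List Step // l.length ≤ n} :=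
  (List.finite_length_le Step n).to_subtype

instance (n p : ℕ) : Finite (S n p) :=
  Finite.of_injective
    (fun x : S n p => (⟨x.1, le_of_eq x.2.1⟩ : {l : List Step // l.length ≤ n}))
    (by intro a b h; apply Subtype.ext; simpa [Subtype.ext_iff] using h)

instance (n p : ℕ) : Finite (PH n p) :=
  Finite.of_injective
    (fun x : PH n p => (⟨x.1, by have := x.2.1; omega⟩ : {l : List Step // l.length ≤ n}))
    (by intro a b h; apply Subtype.ext; simpa [Subtype.ext_iff] using h)

instance (n p : ℕ) : Finite (TH n p) :=
  Finite.of_injective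
    (fun x : TH n p => (⟨x.1, by have := x.2.1; omega⟩ : {l : List Step // l.length ≤ n}))
    (by intro a b h; apply Subtype.ext; simpa [Subtype.ext_iff] using h)

instance (n p : ℕ) : Finite (TT n p) :=
  Finite.of_injective
    (fun x : TT n p =>
      ((⟨x.1.1, by have := x.2.1; omega⟩, ⟨x.1.2, by have := x.2.1; omega⟩) :
        {l : List Step // l.length ≤ n} × {l : List Step // l.length ≤ n}))
    (by
      intro a b h
      rw [Prod.mk.injEq] at h
      apply Subtype.ext
      exact Prod.ext (congrArg Subtype.val h.1) (congrArg Subtype.val h.2))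

instance (n p : ℕ) : Finite (PP n p) :=
  Finite.of_injective
    (fun x : PP n p =>
      ((⟨x.1.1, by have := x.2.1; omega⟩, ⟨x.1.2, by have := x.2.1; omega⟩) :
        {l : List Step // l.length ≤ n} × {l : List Step // l.length ≤ n}))
    (by
      intro a b h
      rw [Prod.mk.injEq] at h
      apply Subtype.ext
      exact Prod.ext (congrArg Subtype.val h.1) (congrArg Subtype.val h.2))

noncomputable def cc (n p : ℕ) : ℕ := Nat.card (S n p)

lemma plateauCount_H : plateauCount [Step.H] = 0 := by decide

lemma cc_zero (p : ℕ) : cc 0 p = if p = 0 then 1 else 0 := by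
  cases p with
  | zero =>
    haveI : Unique (S 0 0) :=
      { default := ⟨[], rfl, isMotzkin_nil, plateauCount_nil⟩
        uniq := by
          rintro ⟨l, hl, _⟩
          apply Subtype.ext
          simpa using List.length_eq_zero_iff.mp hl }
    simp [cc, Nat.card_unique]
  | succ p =>
    haveI : IsEmpty (S 0 (p+1)) := by
      constructor
      rintro ⟨l, hl, _, hp⟩
      rw [List.length_eq_zero_iff.mp hl, plateauCount_nil] at hp
      exact Nat.succ_ne_zero p hp.symm
    simp [cc, Nat.card_of_isEmpty]

lemma cc_one (p : ℕ) : cc 1 p = if p = 0 then 1 else 0 := by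
  have huniq : ∀ x : List Step, x.length = 1 → IsMotzkin x → x = [Step.H] := by
    intro x hx hm
    obtain ⟨a, rfl⟩ := List.length_eq_one_iff.mp hx
    rw [isMotzkin_singleton hm]
  cases p with
  | zero =>
    haveI : Unique (S 1 0) :=
      { default := ⟨[Step.H], rfl, isMotzkin_H, plateauCount_H⟩
        uniq := by
          rintro ⟨l, hl, hm, _⟩
          exact Subtype.ext (huniq l hl hm) }
    simp [cc, Nat.card_unique]
  | succ p =>
    haveI : IsEmpty (S 1 (p+1)) := by
      constructor
      rintro ⟨l, hl, hm, hp⟩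
      rw [huniq l hl hm, plateauCount_H] at hp
      exact Nat.succ_ne_zero p hp.symm
    simp [cc, Nat.card_of_isEmpty]
open Classical in
lemma card_decomp (n p : ℕ) : cc (n+2) p = cc (n+1) p + Nat.card (TT n p) := by
  have e := (Equiv.sumCompl (fun x : S (n+2) p => x.1.head? = some Step.H))
  rw [cc, ← Nat.card_congr e, Nat.card_sum]
  congr 1
  · -- H case
    refine (Nat.card_congr (Equiv.ofBijective
      (fun y : S (n+1) p =>
        (⟨⟨Step.H :: y.1, by simp [y.2.1], isMotzkin_cons_H.mpr y.2.2.1, by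
          rw [plateauCount_cons]; simp [y.2.2.2]⟩, rfl⟩ :
          {x : S (n+2) p // x.1.head? = some Step.H})) ⟨?_, ?_⟩)).symm
    · intro a b hab
      apply Subtype.ext
      have : (Step.H :: a.1) = (Step.H :: b.1) :=
        congrArg (fun z => z.1.1) hab
      simpa using this
    · rintro ⟨⟨l, hl⟩, hhead⟩
      obtain ⟨t, rfl⟩ : ∃ t, l = Step.H :: t := by
        cases l with
        | nil => simp at hhead
        | cons s t =>
          simp only [List.head?_cons, Option.some.injEq] at hhead
          exact ⟨t, by rw [hhead]⟩
      refine ⟨⟨t, by simpa using hl.1, isMotzkin_cons_H.mp hl.2.1, ?_⟩, ?_⟩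
      · have := hl.2.2
        rw [plateauCount_cons] at this
        simpa using this
      · apply Subtype.ext; apply Subtype.ext; rfl
  · -- U case
    refine (Nat.card_congr (Equiv.ofBijective
      (fun y : TT n p =>
        (⟨⟨Step.U :: y.1.1 ++ Step.D :: y.1.2, by
            simp only [List.length_cons, List.length_append]
            have := y.2.1
            omega,
          isMotzkin_U_append y.2.2.1 y.2.2.2.1, by
            rw [plateau_U_append y.2.2.1]
            exact y.2.2.2.2⟩, by simp⟩ :
          {x : S (n+2) p // ¬ x.1.head? = some Step.H})) ⟨?_, ?_⟩)).symm
    · intro a b hab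
      have hv : Step.U :: a.1.1 ++ Step.D :: a.1.2 = Step.U :: b.1.1 ++ Step.D :: b.1.2 :=
        congrArg (fun z => z.1.1) hab
      rw [List.cons_append, List.cons_append, List.cons.injEq] at hv
      have hlen : a.1.1.length = b.1.1.length := by
        have h1 := fr_U_append a.1.2 a.2.2.1
        have h2 := fr_U_append b.1.2 b.2.2.1
        rw [hv.2] at h1
        rw [h1] at h2
        exact h2
      obtain ⟨h3, h4⟩ := List.append_inj hv.2 hlen
      apply Subtype.ext
      exact Prod.ext h3 (by simpa using h4)
    · rintro ⟨⟨l, hl⟩, hhead⟩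
      obtain ⟨s, t, rfl⟩ : ∃ s t, l = s :: t := by
        cases l with
        | nil => exact absurd hl.1 (by simp)
        | cons s t => exact ⟨s, t, rfl⟩
      cases s with
      | H => simp at hhead
      | D => exact absurd hl.2.1 not_isMotzkin_cons_D
      | U =>
        obtain ⟨hm1, hm2, hjlt, hrecon⟩ := U_decomp hl.2.1
        refine ⟨⟨(t.take (fr 0 t), t.drop (fr 0 t + 1)), ?_, hm1, hm2, ?_⟩, ?_⟩
        · have hlen := hl.1
          simp only [List.length_cons] at hlen
          simp only [List.length_take, List.length_drop]
          omega
        · have h5 : plateauCount (Step.U :: t.take (fr 0 t) ++ Step.D :: t.drop (fr 0 t + 1)) = p := by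
            rw [List.cons_append, ← hrecon]; exact hl.2.2
          rw [plateau_U_append hm1] at h5
          exact h5
        · apply Subtype.ext; apply Subtype.ext
          show Step.U :: (t.take (fr 0 t) ++ Step.D :: t.drop (fr 0 t + 1)) = Step.U :: t
          rw [← hrecon]
open Classical in
lemma card_split (n p : ℕ) :
    Nat.card (TT n p) + Nat.card (PH n p) = Nat.card (PP n p) + Nat.card (TH n p) := by
  have eT := (Equiv.sumCompl (fun x : TT n p => x.1.1 = [Step.H]))
  have eP := (Equiv.sumCompl (fun x : PP n p => x.1.1 = [Step.H]))
  have hT : Nat.card (TT n p)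
      = Nat.card {x : TT n p // x.1.1 = [Step.H]} + Nat.card {x : TT n p // ¬ x.1.1 = [Step.H]} := by
    rw [← Nat.card_congr eT, Nat.card_sum]
  have hP : Nat.card (PP n p)
      = Nat.card {x : PP n p // x.1.1 = [Step.H]} + Nat.card {x : PP n p // ¬ x.1.1 = [Step.H]} := by
    rw [← Nat.card_congr eP, Nat.card_sum]
  have h1 : Nat.card {x : TT n p // x.1.1 = [Step.H]} = Nat.card (TH n p) := by
    refine (Nat.card_congr (Equiv.ofBijective
      (fun y : TH n p =>
        (⟨⟨([Step.H], y.1), by have := y.2.1; simp; omega,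
            isMotzkin_H, y.2.2.1, by
              have := y.2.2.2
              simp [plateauCount_H]
              omega⟩, rfl⟩ :
          {x : TT n p // x.1.1 = [Step.H]})) ⟨?_, ?_⟩)).symm
    · intro a b hab
      apply Subtype.ext
      have : ([Step.H], a.1) = ([Step.H], b.1) := congrArg (fun z => z.1.1) hab
      simpa using this
    · rintro ⟨⟨⟨m, m'⟩, hx⟩, hm⟩
      simp only at hm
      subst hm
      refine ⟨⟨m', ?_, hx.2.2.1, ?_⟩, ?_⟩
      · have := hx.1; simp at this; omega
      · have := hx.2.2.2
        simp [plateauCount_H] at this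
        omega
      · apply Subtype.ext; apply Subtype.ext; rfl
  have h2 : Nat.card {x : PP n p // x.1.1 = [Step.H]} = Nat.card (PH n p) := by
    refine (Nat.card_congr (Equiv.ofBijective
      (fun y : PH n p =>
        (⟨⟨([Step.H], y.1), by have := y.2.1; simp; omega,
            isMotzkin_H, y.2.2.1, by have := y.2.2.2; simp [plateauCount_H]; omega⟩, rfl⟩ :
          {x : PP n p // x.1.1 = [Step.H]})) ⟨?_, ?_⟩)).symm
    · intro a b hab
      apply Subtype.ext
      have : ([Step.H], a.1) = ([Step.H], b.1) := congrArg (fun z => z.1.1) hab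
      simpa using this
    · rintro ⟨⟨⟨m, m'⟩, hx⟩, hm⟩
      simp only at hm
      subst hm
      refine ⟨⟨m', by have := hx.1; simp at this; omega, hx.2.2.1, ?_⟩, ?_⟩
      · have := hx.2.2.2
        simp [plateauCount_H] at this
        omega
      · apply Subtype.ext; apply Subtype.ext; rfl
  have h3 : Nat.card {x : TT n p // ¬ x.1.1 = [Step.H]}
      = Nat.card {x : PP n p // ¬ x.1.1 = [Step.H]} := by
    refine Nat.card_congr (Equiv.ofBijective
      (fun y : {x : TT n p // ¬ x.1.1 = [Step.H]} =>
        (⟨⟨y.1.1, y.1.2.1, y.1.2.2.1, y.1.2.2.2.1, by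
          have := y.1.2.2.2.2
          rw [if_neg y.2] at this
          omega⟩, y.2⟩ :
          {x : PP n p // ¬ x.1.1 = [Step.H]})) ⟨?_, ?_⟩)
    · intro a b hab
      apply Subtype.ext; apply Subtype.ext
      exact congrArg (fun z => z.1.1) hab
    · rintro ⟨⟨mm, hx⟩, hm⟩
      refine ⟨⟨⟨mm, hx.1, hx.2.1, hx.2.2.1, by rw [if_neg hm]; omega⟩, hm⟩, ?_⟩
      apply Subtype.ext; apply Subtype.ext; rfl
  omega
lemma my_card_sigma {ι : Type*} [Fintype ι] (f : ι → Type*) [∀ i, Finite (f i)] :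
    Nat.card (Σ i, f i) = ∑ i, Nat.card (f i) := by
  letI : ∀ i, Fintype (f i) := fun i => Fintype.ofFinite _
  simp [Nat.card_eq_fintype_card, Fintype.card_sigma]

set_option maxHeartbeats 1000000 in
lemma card_conv (n p : ℕ) :
    Nat.card (PP n p)
      = ∑ ij ∈ Finset.HasAntidiagonal.antidiagonal n, ∑ qr ∈ Finset.HasAntidiagonal.antidiagonal p,
          cc ij.1 qr.1 * cc ij.2 qr.2 := by
  classical
  set I := (Finset.HasAntidiagonal.antidiagonal n ×ˢ Finset.HasAntidiagonal.antidiagonal p : Finset ((ℕ × ℕ) × (ℕ × ℕ)))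
  have key : Nat.card (PP n p)
      = Nat.card (Σ z : I, S z.1.1.1 z.1.2.1 × S z.1.1.2 z.1.2.2) := by
    refine (Nat.card_congr (Equiv.ofBijective
      (fun w : (Σ z : I, S z.1.1.1 z.1.2.1 × S z.1.1.2 z.1.2.2) =>
        (⟨(w.2.1.1, w.2.2.1), by
          obtain ⟨⟨⟨⟨a, b⟩, ⟨q, r⟩⟩, hz⟩, u, v⟩ := w
          simp only [Finset.mem_product, Finset.HasAntidiagonal.mem_antidiagonal, I] at hz
          exact ⟨by rw [u.2.1, v.2.1]; exact hz.1, u.2.2.1, v.2.2.1, by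
            rw [u.2.2.2, v.2.2.2]; exact hz.2⟩⟩ : PP n p)) ⟨?_, ?_⟩)).symm
    · rintro ⟨⟨⟨⟨a, b⟩, ⟨q, r⟩⟩, hz⟩, u, v⟩ ⟨⟨⟨⟨a', b'⟩, ⟨q', r'⟩⟩, hz'⟩, u', v'⟩ hab
      have hu : u.1 = u'.1 := congrArg (fun z => z.1.1) hab
      have hv : v.1 = v'.1 := congrArg (fun z => z.1.2) hab
      have hu1 : u.1.length = a := u.2.1
      have hu1' : u'.1.length = a' := u'.2.1
      have hv1 : v.1.length = b := v.2.1
      have hv1' : v'.1.length = b' := v'.2.1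
      have hu2 : plateauCount u.1 = q := u.2.2.2
      have hu2' : plateauCount u'.1 = q' := u'.2.2.2
      have hv2 : plateauCount v.1 = r := v.2.2.2
      have hv2' : plateauCount v'.1 = r' := v'.2.2.2
      have ha : a = a' := by rw [← hu1, ← hu1', hu]
      have hb : b = b' := by rw [← hv1, ← hv1', hv]
      have hq : q = q' := by rw [← hu2, ← hu2', hu]
      have hr : r = r' := by rw [← hv2, ← hv2', hv]
      subst ha; subst hb; subst hq; subst hr
      exact congrArg _ (Prod.ext (Subtype.ext hu) (Subtype.ext hv))
    · rintro ⟨⟨m, m'⟩, hx⟩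
      refine ⟨⟨⟨⟨(m.length, m'.length), (plateauCount m, plateauCount m')⟩, by
        simp only [Finset.mem_product, Finset.HasAntidiagonal.mem_antidiagonal, I]
        exact ⟨hx.1, hx.2.2.2⟩⟩,
        (⟨m, rfl, hx.2.1, rfl⟩, ⟨m', rfl, hx.2.2.1, rfl⟩)⟩, ?_⟩
      apply Subtype.ext; rfl
  rw [key, my_card_sigma]
  calc (∑ i : I, Nat.card (S i.1.1.1 i.1.2.1 × S i.1.1.2 i.1.2.2))
      = ∑ i : I, (fun z : (ℕ × ℕ) × (ℕ × ℕ) => cc z.1.1 z.2.1 * cc z.1.2 z.2.2) i.1 := by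
        apply Finset.sum_congr rfl
        intro i _
        exact Nat.card_prod _ _
    _ = ∑ z ∈ I, cc z.1.1 z.2.1 * cc z.1.2 z.2.2 :=
        Finset.sum_coe_sort I (fun z => cc z.1.1 z.2.1 * cc z.1.2 z.2.2)
    _ = ∑ ij ∈ Finset.HasAntidiagonal.antidiagonal n, ∑ qr ∈ Finset.HasAntidiagonal.antidiagonal p,
          cc ij.1 qr.1 * cc ij.2 qr.2 := by
        rw [Finset.sum_product]
lemma card_PH_succ (n p : ℕ) : Nat.card (PH (n+1) p) = cc n p :=
  Nat.card_congr ((Equiv.subtypeEquivRight (fun l => by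
    constructor <;> rintro ⟨h1, h2, h3⟩ <;> exact ⟨by omega, h2, h3⟩)) :
      PH (n+1) p ≃ S n p)

lemma card_PH_zero (p : ℕ) : Nat.card (PH 0 p) = 0 := by
  haveI : IsEmpty (PH 0 p) := ⟨by rintro ⟨l, h, -⟩; omega⟩
  exact Nat.card_of_isEmpty

lemma card_TH_succ (n q : ℕ) : Nat.card (TH (n+1) (q+1)) = cc n q :=
  Nat.card_congr ((Equiv.subtypeEquivRight (fun l => by
    constructor <;> rintro ⟨h1, h2, h3⟩ <;> exact ⟨by omega, h2, by omega⟩)) :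
      TH (n+1) (q+1) ≃ S n q)

lemma card_TH_zero_right (n : ℕ) : Nat.card (TH n 0) = 0 := by
  haveI : IsEmpty (TH n 0) := ⟨by rintro ⟨l, -, -, h⟩; omega⟩
  exact Nat.card_of_isEmpty

lemma card_TH_zero_left (p : ℕ) : Nat.card (TH 0 p) = 0 := by
  haveI : IsEmpty (TH 0 p) := ⟨by rintro ⟨l, h, -⟩; omega⟩
  exact Nat.card_of_isEmpty

lemma main_two (p : ℕ) :
    cc 2 p = cc 1 p + ∑ ij ∈ Finset.HasAntidiagonal.antidiagonal 0, ∑ qr ∈ Finset.HasAntidiagonal.antidiagonal p,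
      cc ij.1 qr.1 * cc ij.2 qr.2 := by
  have h1 : cc 2 p = cc 1 p + Nat.card (TT 0 p) := card_decomp 0 p
  have h2 := card_split 0 p
  have h3 := card_PH_zero p
  have h4 := card_TH_zero_left p
  have h5 := card_conv 0 p
  omega

lemma main_zero (n : ℕ) :
    cc (n+3) 0 + cc n 0 = cc (n+2) 0
      + ∑ ij ∈ Finset.HasAntidiagonal.antidiagonal (n+1), ∑ qr ∈ Finset.HasAntidiagonal.antidiagonal 0,
          cc ij.1 qr.1 * cc ij.2 qr.2 := by
  have h1 : cc (n+3) 0 = cc (n+2) 0 + Nat.card (TT (n+1) 0) := card_decomp (n+1) 0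
  have h2 := card_split (n+1) 0
  have h3 := card_PH_succ n 0
  have h4 := card_TH_zero_right (n+1)
  have h5 := card_conv (n+1) 0
  omega

lemma main_succ (n q : ℕ) :
    cc (n+3) (q+1) + cc n (q+1) = cc (n+2) (q+1) + cc n q
      + ∑ ij ∈ Finset.HasAntidiagonal.antidiagonal (n+1), ∑ qr ∈ Finset.HasAntidiagonal.antidiagonal (q+1),
          cc ij.1 qr.1 * cc ij.2 qr.2 := by
  have h1 : cc (n+3) (q+1) = cc (n+2) (q+1) + Nat.card (TT (n+1) (q+1)) := card_decomp (n+1) (q+1)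
  have h2 := card_split (n+1) (q+1)
  have h3 := card_PH_succ n (q+1)
  have h4 := card_TH_succ n q
  have h5 := card_conv (n+1) (q+1)
  omega

lemma c_coe (n p : ℕ) : c n p = cc n p := by
  simp [c, cc, S]

lemma c_lit0 (p : ℕ) : c (0:ℤ) (p:ℤ) = cc 0 p := by simpa using c_coe 0 p
lemma c_lit1 (p : ℕ) : c (1:ℤ) (p:ℤ) = cc 1 p := by simpa using c_coe 1 p
lemma c_lit2 (p : ℕ) : c (2:ℤ) (p:ℤ) = cc 2 p := by simpa using c_coe 2 p

open PowerSeries in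
lemma key_eq (G : PowerSeries (PowerSeries ℚ))
    (hG : G = PowerSeries.mk fun n => PowerSeries.mk fun p => (c n p : ℚ)) :
    G = 1 + G * X ^ 1 + (G * G) * X ^ 2
      + ((PowerSeries.C PowerSeries.X : PowerSeries (PowerSeries ℚ)) * G) * X ^ 3 - G * X ^ 3 := by
  subst hG
  apply PowerSeries.ext
  intro n
  rw [map_sub, map_add, map_add, map_add, PowerSeries.coeff_one,
    PowerSeries.coeff_mul_X_pow', PowerSeries.coeff_mul_X_pow',
    PowerSeries.coeff_mul_X_pow', PowerSeries.coeff_mul_X_pow']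
  rcases n with _ | _ | _ | n
  · -- n = 0
    rw [if_pos rfl, if_neg (by omega), if_neg (by omega), if_neg (by omega),
      if_neg (by omega), PowerSeries.coeff_mk]
    apply PowerSeries.ext
    intro p
    simp only [map_sub, map_add, PowerSeries.coeff_one, PowerSeries.coeff_mk, map_zero]
    simp only [c_lit0, c_coe, cc_zero]
    split_ifs <;> norm_num
  · -- n = 1
    rw [if_neg (by omega), if_pos (by omega), if_neg (by omega), if_neg (by omega),
      if_neg (by omega), PowerSeries.coeff_mk, PowerSeries.coeff_mk]
    apply PowerSeries.ext
    intro p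
    simp only [map_sub, map_add, PowerSeries.coeff_one, PowerSeries.coeff_mk, map_zero]
    norm_num
    simp only [c_lit0, c_lit1, c_coe, cc_zero, cc_one]
  · -- n = 2
    rw [if_neg (by omega), if_pos (by omega), if_pos (by omega), if_neg (by omega),
      if_neg (by omega), PowerSeries.coeff_mk, PowerSeries.coeff_mk]
    apply PowerSeries.ext
    intro p
    simp only [map_sub, map_add, PowerSeries.coeff_one, PowerSeries.coeff_mul, map_sum,
      PowerSeries.coeff_mk, map_zero]
    norm_num
    simp only [c_lit0, c_lit1, c_lit2, c_coe]
    have h := main_two p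
    push_cast at h
    rw [h]
    simp [Finset.Nat.antidiagonal_zero]
  · -- n + 3
    rw [if_neg (by omega), if_pos (by omega), if_pos (by omega), if_pos (by omega),
      if_pos (by omega)]
    rw [show n + 1 + 1 + 1 - 1 = n + 2 from by omega,
      show n + 1 + 1 + 1 - 2 = n + 1 from by omega,
      show n + 1 + 1 + 1 - 3 = n from by omega,
      show n + 1 + 1 + 1 = n + 3 from by omega,
      PowerSeries.coeff_mk, PowerSeries.coeff_mk,
      PowerSeries.coeff_C_mul, PowerSeries.coeff_mk]
    apply PowerSeries.ext
    intro p
    rcases p with _ | q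
    · have hX : (PowerSeries.coeff 0)
          (PowerSeries.X * PowerSeries.mk fun p => (c n p : ℚ)) = 0 := by simp
      simp only [map_sub, map_add, map_zero]
      rw [hX]
      simp only [PowerSeries.coeff_mul, map_sum, PowerSeries.coeff_mk, c_coe]
      have h := main_zero n
      have h' : (cc (n+3) 0 : ℚ) + (cc n 0 : ℚ)
          = (cc (n+2) 0 : ℚ) + ∑ ij ∈ Finset.HasAntidiagonal.antidiagonal (n+1), ∑ qr ∈ Finset.HasAntidiagonal.antidiagonal 0,
              (cc ij.1 qr.1 : ℚ) * (cc ij.2 qr.2 : ℚ) := by exact_mod_cast h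
      linarith [h']
    · have hX : (PowerSeries.coeff (q+1))
          (PowerSeries.X * PowerSeries.mk fun p => (c n p : ℚ)) = (c n q : ℚ) := by
        rw [PowerSeries.coeff_succ_X_mul, PowerSeries.coeff_mk]
      simp only [map_sub, map_add, map_zero]
      rw [hX]
      simp only [PowerSeries.coeff_mul, map_sum, PowerSeries.coeff_mk, c_coe]
      have h := main_succ n q
      have h' : (cc (n+3) (q+1) : ℚ) + (cc n (q+1) : ℚ)
          = (cc (n+2) (q+1) : ℚ) + (cc n q : ℚ)
            + ∑ ij ∈ Finset.HasAntidiagonal.antidiagonal (n+1), ∑ qr ∈ Finset.HasAntidiagonal.antidiagonal (q+1),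
              (cc ij.1 qr.1 : ℚ) * (cc ij.2 qr.2 : ℚ) := by exact_mod_cast h
      linarith [h']

end MZ

open PowerSeries in
/-- Working in `ℚ[[x,y]]` realized as `(ℚ[[y]])[[x]]`: the outer variable is `x`
and the inner variable is `y`; `g` is the bivariate plateau generating function. -/
theorem explicit_form
    (g : PowerSeries (PowerSeries ℚ))
    (hg : g = PowerSeries.mk fun n => PowerSeries.mk fun p => (c n p : ℚ)) :
    (2 * X ^ 2 * g - (1 - X + X ^ 3 - X ^ 3 * (PowerSeries.C X : PowerSeries (PowerSeries ℚ)))) ^ 2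
      = (1 - 3 * X + X ^ 3 - X ^ 3 * (PowerSeries.C X : PowerSeries (PowerSeries ℚ)))
        * (1 + X + X ^ 3 - X ^ 3 * (PowerSeries.C X : PowerSeries (PowerSeries ℚ))) := by
  have key := MZ.key_eq g hg
  linear_combination (-4 * (X : PowerSeries (PowerSeries ℚ)) ^ 2) * key
end

section
/- Let g(x,y) = Σ_{n≥0} Σ_{p≥0} c(n,p) x^n y^p ∈ ℚ[[x,y]]. Then g satisfies the functional equation g(x,y) = 1 + x·g(x,y) + x²·g(x,y)·(g(x,y) - x + xy). -/
namespace MotzkinAux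

open Step

instance : Fintype Step :=
  ⟨{Step.U, Step.H, Step.D}, fun x => by cases x <;> simp⟩

instance : DecidablePred IsMotzkin := fun l =>
  decidable_of_iff
    ((∀ k < l.length, (l.take k).count Step.D ≤ (l.take k).count Step.U) ∧
      l.count Step.U = l.count Step.D) (by
    constructor
    · rintro ⟨h1, h2⟩
      refine ⟨fun k => ?_, h2⟩
      rcases lt_or_ge k l.length with h | h
      · exact h1 k h
      · rw [List.take_of_length_le h]; exact le_of_eq h2.symm
    · rintro ⟨h1, h2⟩; exact ⟨fun k _ => h1 k, h2⟩)

def allLists : ℕ → Finset (List Step)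
  | 0 => {[]}
  | n + 1 => Finset.image₂ List.cons Finset.univ (allLists n)

lemma mem_allLists : ∀ n (l : List Step), l ∈ allLists n ↔ l.length = n
  | 0, l => by simp [allLists, List.length_eq_zero_iff]
  | n + 1, l => by
    simp only [allLists, Finset.mem_image₂, Finset.mem_univ, true_and]
    constructor
    · rintro ⟨a, t, ht, rfl⟩
      simp [(mem_allLists n t).1 ht]
    · intro h
      match l with
      | a :: t => exact ⟨a, t, (mem_allLists n t).2 (by simpa using h), rfl⟩

noncomputable def MSet (n : ℕ) : Finset (List Step) := (allLists n).filter IsMotzkin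

lemma mem_MSet {n : ℕ} {l : List Step} : l ∈ MSet n ↔ l.length = n ∧ IsMotzkin l := by
  simp [MSet, Finset.mem_filter, mem_allLists]

lemma c_eq (n p : ℕ) :
    c n p = ((MSet n).filter (fun l => plateauCount l = p)).card := by
  have h : (0 : ℤ) ≤ n ∧ (0 : ℤ) ≤ p := ⟨Int.ofNat_nonneg n, Int.ofNat_nonneg p⟩
  rw [c, if_pos h]
  rw [← Nat.card_eq_finsetCard]
  refine Nat.card_congr (Equiv.subtypeEquivRight fun l => ?_)
  simp [mem_MSet, Int.toNat_natCast]
  tauto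

open PowerSeries

noncomputable def a (n : ℕ) : PowerSeries ℚ :=
  ∑ l ∈ MSet n, (X : PowerSeries ℚ) ^ (plateauCount l)

lemma coeff_a (n p : ℕ) : coeff p (a n) = (c n p : ℚ) := by
  rw [a, map_sum, c_eq n p]
  simp only [coeff_X_pow]
  rw [Finset.sum_boole]
  congr 1
  apply Finset.card_nbij id (fun x hx => by simpa [eq_comm] using hx)
    (fun x hx y hy h => h)
    (fun x hx => ⟨x, by simpa [eq_comm] using hx, rfl⟩)


lemma pc_nil : plateauCount [] = 0 := by simp [plateauCount]

lemma pc_cons (s : Step) (l : List Step) :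
    plateauCount (s :: l) =
      (if (s :: l).take 3 = [Step.U, Step.H, Step.D] then 1 else 0) + plateauCount l := by
  rw [plateauCount, plateauCount, Finset.card_filter, Finset.card_filter,
    List.length_cons, Finset.sum_range_succ']
  simp only [List.drop_succ_cons, List.drop_zero]
  ring

/-- appending `D :: m2` : cross plateaus only when `m1` ends with `[U, H]`. -/
lemma pc_append_D (m2 : List Step) : ∀ m1 : List Step,
    plateauCount (m1 ++ Step.D :: m2) =
      plateauCount m1 + plateauCount m2 +
        (if m1.reverse.take 2 = [Step.H, Step.U] then 1 else 0) := by
  intro m1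
  induction m1 with
  | nil => simp [pc_cons, pc_nil]
  | cons s t ih =>
    match t with
    | [] =>
      cases s <;> simp [pc_cons, pc_nil]
    | [b] =>
      rw [List.cons_append, pc_cons, ih, pc_cons]
      cases s <;> cases b <;> simp [pc_cons, pc_nil] <;> ring
    | b :: c :: t' =>
      rw [List.cons_append, pc_cons, ih, pc_cons]
      have h1 : (s :: (b :: c :: t' ++ Step.D :: m2)).take 3 = (s :: b :: c :: t').take 3 := by
        simp
      have h2 : (s :: b :: c :: t').reverse.take 2 = (b :: c :: t').reverse.take 2 := by
        rw [List.reverse_cons, List.take_append_of_le_length (by simp)]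
      rw [h1, h2, pc_cons (s := s) (l := b :: c :: t'), pc_cons (s := b) (l := c :: t')]
      ring


lemma motzkin_nil : IsMotzkin [] := ⟨fun k => by simp, by simp⟩

lemma motzkin_cons_H {m : List Step} : IsMotzkin (Step.H :: m) ↔ IsMotzkin m := by
  constructor
  · rintro ⟨h1, h2⟩
    refine ⟨fun k => ?_, ?_⟩
    · have := h1 (k + 1)
      simpa [List.count_cons] using this
    · simpa [List.count_cons] using h2
  · rintro ⟨h1, h2⟩
    refine ⟨fun k => ?_, ?_⟩
    · match k with
      | 0 => simp
      | k + 1 => simpa [List.count_cons] using h1 k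
    · simpa [List.count_cons] using h2

lemma motzkin_not_D {t : List Step} : ¬ IsMotzkin (Step.D :: t) := by
  rintro ⟨h1, _⟩
  have := h1 1
  simp [List.count_cons] at this

lemma motzkin_singleton {s : Step} (h : IsMotzkin [s]) : s = Step.H := by
  rcases h with ⟨_, h2⟩
  cases s <;> simp_all [List.count_cons]

lemma motzkin_not_HD {t : List Step} : ¬ IsMotzkin (Step.H :: Step.D :: t) := by
  rintro ⟨h1, _⟩
  have := h1 2
  simp [List.count_cons] at this

lemma motzkin_take2 {m : List Step} (h : IsMotzkin m) : m.take 2 ≠ [Step.H, Step.D] := by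
  intro hm
  match m, hm with
  | Step.H :: Step.D :: t, _ => exact motzkin_not_HD h

lemma motzkin_rev {m : List Step} (h : IsMotzkin m) :
    m.reverse.take 2 ≠ [Step.H, Step.U] := by
  intro hm
  have hrev : m.reverse = [Step.H, Step.U] ++ m.reverse.drop 2 := by
    conv_lhs => rw [← List.take_append_drop 2 m.reverse, hm]
  set t : List Step := (m.reverse.drop 2).reverse with ht
  have hme : m = t ++ [Step.U, Step.H] := by
    have := congrArg List.reverse hrev
    simpa [ht] using this
  rcases h with ⟨h1, h2⟩
  have hcu : m.count Step.U = t.count Step.U + 1 := by simp [hme]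
  have hcd : m.count Step.D = t.count Step.D := by simp [hme]
  have hpre := h1 t.length
  rw [hme, List.take_append_of_le_length le_rfl, List.take_length] at hpre
  omega

lemma count_take_append (c : Step) (j : ℕ) (l1 l2 : List Step) :
    ((l1 ++ l2).take j).count c = (l1.take j).count c + (l2.take (j - l1.length)).count c := by
  rw [List.take_append, List.count_append]

lemma motzkin_UD_append {m1 m2 : List Step} (h1 : IsMotzkin m1) (h2 : IsMotzkin m2) :
    IsMotzkin (Step.U :: (m1 ++ Step.D :: m2)) := by
  constructor
  · intro k
    match k with
    | 0 => simp
    | j + 1 =>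
      rw [List.take_succ_cons, List.count_cons, List.count_cons, count_take_append,
        count_take_append]
      rcases Nat.eq_zero_or_eq_succ_pred (j - m1.length) with hj | hj
      · rw [hj]
        have := h1.1 j
        simp
        omega
      · rw [hj, List.take_succ_cons, List.count_cons, List.count_cons]
        have ha := h1.1 j
        have hb := h2.1 (j - m1.length - 1)
        have hc : (m1.take j).count Step.D ≤ (m1.take j).count Step.U := h1.1 j
        have hd : j ≥ m1.length := by omega
        rw [List.take_of_length_le hd] at *
        have := h1.2
        simp
        omega
  · have := h1.2; have := h2.2
    simp [List.count_append, List.count_cons]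
    omega


def frP (t : List Step) (k : ℕ) : Prop :=
  (t.take k).count Step.D = (t.take k).count Step.U + 1

instance (t : List Step) (k : ℕ) : Decidable (frP t k) := by unfold frP; infer_instance

lemma frEx (t : List Step) : ∃ k, frP t k ∨ k = t.length + 1 := ⟨t.length + 1, Or.inr rfl⟩

noncomputable def fr (t : List Step) : ℕ := Nat.find (frEx t)

lemma motzkin_U_bal {t : List Step} (ht : IsMotzkin (Step.U :: t)) :
    t.count Step.D = t.count Step.U + 1 := by
  have := ht.2
  simp [List.count_cons] at this
  omega

lemma motzkin_U_bound {t : List Step} (ht : IsMotzkin (Step.U :: t)) (j : ℕ) :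
    (t.take j).count Step.D ≤ (t.take j).count Step.U + 1 := by
  have := ht.1 (j + 1)
  simpa [List.count_cons] using this

lemma fr_le {t : List Step} (ht : IsMotzkin (Step.U :: t)) : fr t ≤ t.length := by
  apply Nat.find_le
  left
  unfold frP
  rw [List.take_length]
  exact motzkin_U_bal ht

lemma fr_spec {t : List Step} (ht : IsMotzkin (Step.U :: t)) : frP t (fr t) := by
  rcases Nat.find_spec (frEx t) with h | h
  · exact h
  · exfalso; have := fr_le ht; rw [fr] at this; omega

lemma fr_min {t : List Step} {j : ℕ} (hj : j < fr t) :
    (t.take j).count Step.D ≠ (t.take j).count Step.U + 1 := by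
  have := Nat.find_min (frEx t) hj
  intro h
  exact this (Or.inl h)

lemma fr_pos {t : List Step} (ht : IsMotzkin (Step.U :: t)) : 1 ≤ fr t := by
  rcases Nat.eq_zero_or_pos (fr t) with h | h
  · exfalso
    have := fr_spec ht
    rw [h] at this
    simp [frP] at this
  · exact h

lemma fr_lt_count {t : List Step} (ht : IsMotzkin (Step.U :: t)) {j : ℕ} (hj : j < fr t) :
    (t.take j).count Step.D ≤ (t.take j).count Step.U := by
  have h1 := motzkin_U_bound ht j
  have h2 := fr_min hj
  omega

lemma fr_getElem {t : List Step} (ht : IsMotzkin (Step.U :: t)) :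
    ∃ hlt : fr t - 1 < t.length,
      t[fr t - 1] = Step.D ∧
      ((t.take (fr t - 1)).count Step.D = (t.take (fr t - 1)).count Step.U) := by
  have hle := fr_le ht
  have hpos := fr_pos ht
  have hlt : fr t - 1 < t.length := by omega
  refine ⟨hlt, ?_⟩
  have hspec := fr_spec ht
  have hkeq : fr t = (fr t - 1) + 1 := by omega
  rw [frP, hkeq, List.take_succ, List.getElem?_eq_getElem hlt] at hspec
  have hmin := fr_lt_count ht (j := fr t - 1) (by omega)
  cases h : t[fr t - 1] with
  | U => exfalso; rw [h] at hspec; simp [List.count_append, List.count_cons] at hspec; omega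
  | H => exfalso; rw [h] at hspec; simp [List.count_append, List.count_cons] at hspec; omega
  | D =>
    rw [h] at hspec; simp [List.count_append, List.count_cons] at hspec
    exact ⟨rfl, by omega⟩

lemma fr_take_motzkin {t : List Step} (ht : IsMotzkin (Step.U :: t)) :
    IsMotzkin (t.take (fr t - 1)) := by
  obtain ⟨hlt, hD, hbal⟩ := fr_getElem ht
  constructor
  · intro i
    rw [List.take_take]
    exact fr_lt_count ht (by have := fr_pos ht; omega : min i (fr t - 1) < fr t)
  · have := hbal
    omega

lemma fr_drop_motzkin {t : List Step} (ht : IsMotzkin (Step.U :: t)) :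
    IsMotzkin (t.drop (fr t)) := by
  have hspec := fr_spec ht
  constructor
  · intro i
    have hb := motzkin_U_bound ht (fr t + i)
    rw [List.take_add, List.count_append, List.count_append] at hb
    rw [frP] at hspec
    omega
  · have hbal := motzkin_U_bal ht
    conv_lhs at hbal => rw [← List.take_append_drop (fr t) t]
    conv_rhs at hbal => rw [← List.take_append_drop (fr t) t]
    rw [List.count_append, List.count_append] at hbal
    rw [frP] at hspec
    omega

lemma fr_reconstruct {t : List Step} (ht : IsMotzkin (Step.U :: t)) :
    t = t.take (fr t - 1) ++ Step.D :: t.drop (fr t) := by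
  obtain ⟨hlt, hD, _⟩ := fr_getElem ht
  have hd : t.drop (fr t - 1) = Step.D :: t.drop (fr t) := by
    rw [List.drop_eq_getElem_cons hlt, hD]
    congr 1
    congr 1
    have := fr_pos ht
    omega
  conv_lhs => rw [← List.take_append_drop (fr t - 1) t, hd]

lemma fr_append {m1 m2 : List Step} (h1 : IsMotzkin m1) :
    fr (m1 ++ Step.D :: m2) = m1.length + 1 := by
  have hP : frP (m1 ++ Step.D :: m2) (m1.length + 1) := by
    rw [frP, List.take_append, List.take_of_length_le (by omega),
      Nat.add_sub_cancel_left, List.take_succ_cons, List.take_zero]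
    have hb := h1.2
    simp [List.count_append, List.count_cons]
    omega
  apply le_antisymm
  · exact Nat.find_le (Or.inl hP)
  · by_contra hcon
    push_neg at hcon
    unfold fr at hcon
    have hcon' : Nat.find (frEx (m1 ++ Step.D :: m2)) ≤ m1.length := by omega
    rcases Nat.find_spec (frEx (m1 ++ Step.D :: m2)) with h | h
    · rw [frP, List.take_append_of_le_length hcon'] at h
      have := h1.1 (Nat.find (frEx (m1 ++ Step.D :: m2)))
      omega
    · rw [h] at hcon
      simp [List.length_append] at hcon


lemma pc_cons_H (m : List Step) : plateauCount (Step.H :: m) = plateauCount m := by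
  rw [pc_cons]
  simp

lemma pc_U_append {m1 m2 : List Step} (h1 : IsMotzkin m1) :
    plateauCount (Step.U :: (m1 ++ Step.D :: m2)) =
      plateauCount m1 + plateauCount m2 + (if m1 = [Step.H] then 1 else 0) := by
  have h3 : plateauCount (Step.U :: m1) = plateauCount m1 := by
    rw [pc_cons]
    have hne : (Step.U :: m1).take 3 ≠ [Step.U, Step.H, Step.D] := by
      intro hc
      apply motzkin_take2 h1
      rw [List.take_succ_cons] at hc
      simpa using hc
    simp [motzkin_take2 h1]
  have h4 : ((Step.U :: m1).reverse.take 2 = [Step.H, Step.U]) ↔ m1 = [Step.H] := by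
    match m1, h1 with
    | [], _ => simp
    | [x], h1 =>
      have hx := motzkin_singleton h1
      subst hx
      simp
    | x :: y :: t, h1 =>
      have hr := motzkin_rev h1
      rw [List.reverse_cons, List.take_append_of_le_length (by simp)]
      constructor
      · intro hc; exact absurd hc hr
      · intro hc; simp at hc
  rw [show Step.U :: (m1 ++ Step.D :: m2) = (Step.U :: m1) ++ Step.D :: m2 from rfl,
    pc_append_D, h3]
  congr 1
  simp only [h4]

open PowerSeries

noncomputable def e (i : ℕ) : PowerSeries ℚ :=
  ∑ l ∈ MSet i, (X : PowerSeries ℚ) ^ (plateauCount l + if l = [Step.H] then 1 else 0)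

lemma MSet_zero : MSet 0 = {[]} := by
  ext l
  simp [mem_MSet, List.length_eq_zero_iff, motzkin_nil]
  intro h
  subst h
  exact motzkin_nil

lemma MSet_one : MSet 1 = {[Step.H]} := by
  ext l
  simp only [mem_MSet, Finset.mem_singleton]
  constructor
  · rintro ⟨hlen, hm⟩
    rcases List.length_eq_one_iff.1 hlen with ⟨x, rfl⟩
    rw [motzkin_singleton hm]
  · rintro rfl
    exact ⟨rfl, motzkin_cons_H.2 motzkin_nil⟩

lemma pc_single_H : plateauCount [Step.H] = 0 := by
  rw [pc_cons_H, pc_nil]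

lemma a_zero : a 0 = 1 := by simp [a, MSet_zero, pc_nil]

lemma a_one : a 1 = 1 := by simp [a, MSet_one, pc_single_H]

lemma e_one : e 1 = X := by simp [e, MSet_one, pc_single_H]

lemma e_ne {i : ℕ} (h : i ≠ 1) : e i = a i := by
  apply Finset.sum_congr rfl
  intro l hl
  have hne : l ≠ [Step.H] := by
    rintro rfl
    exact h ((mem_MSet.1 hl).1.symm)
  simp [hne]

lemma shape {n : ℕ} {l : List Step} (hl : l ∈ MSet (n + 1))
    (hh : ¬ l.head? = some Step.H) : ∃ t, l = Step.U :: t := by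
  rcases mem_MSet.1 hl with ⟨hlen, hm⟩
  match l with
  | [] => simp at hlen
  | Step.U :: t => exact ⟨t, rfl⟩
  | Step.H :: t => exact absurd rfl hh
  | Step.D :: t => exact absurd hm motzkin_not_D

lemma sum_headH (n : ℕ) :
    ∑ l ∈ (MSet (n + 1)).filter (fun l => l.head? = some Step.H),
      (X : PowerSeries ℚ) ^ plateauCount l = a n := by
  rw [a]
  refine Finset.sum_bij' (fun l _ => l.tail) (fun m _ => Step.H :: m) ?_ ?_ ?_ ?_ ?_
  · intro l hl
    rcases Finset.mem_filter.1 hl with ⟨hm, hh⟩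
    rcases mem_MSet.1 hm with ⟨hlen, hmo⟩
    match l with
    | Step.H :: t =>
      exact mem_MSet.2 ⟨by simpa using hlen, motzkin_cons_H.1 hmo⟩
  · intro m hm
    rcases mem_MSet.1 hm with ⟨hlen, hmo⟩
    exact Finset.mem_filter.2 ⟨mem_MSet.2 ⟨by simp [hlen], motzkin_cons_H.2 hmo⟩, rfl⟩
  · intro l hl
    rcases Finset.mem_filter.1 hl with ⟨_, hh⟩
    match l with
    | Step.H :: t => rfl
  · intro m _
    rfl
  · intro l hl
    rcases Finset.mem_filter.1 hl with ⟨_, hh⟩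
    match l with
    | Step.H :: t => rw [pc_cons_H]; rfl


lemma mem_facts {n : ℕ} {l : List Step}
    (hl : l ∈ (MSet (n + 1)).filter (fun l => ¬ l.head? = some Step.H)) :
    ∃ t, l = Step.U :: t ∧ IsMotzkin (Step.U :: t) ∧ t.length = n := by
  rcases Finset.mem_filter.1 hl with ⟨hm, hh⟩
  rcases shape hm hh with ⟨t, rfl⟩
  rcases mem_MSet.1 hm with ⟨hlen, hmo⟩
  exact ⟨t, rfl, hmo, by simpa using hlen⟩

lemma sum_headU (n : ℕ) :
    ∑ l ∈ (MSet (n + 1)).filter (fun l => ¬ l.head? = some Step.H),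
      (X : PowerSeries ℚ) ^ plateauCount l
      = ∑ i ∈ Finset.range n, e i * a (n - 1 - i) := by
  have hrhs : ∀ i ∈ Finset.range n, e i * a (n - 1 - i) =
      ∑ m1 ∈ MSet i, ∑ m2 ∈ MSet (n - 1 - i),
        (X : PowerSeries ℚ) ^
          (plateauCount m1 + plateauCount m2 + if m1 = [Step.H] then 1 else 0) := by
    intro i _
    rw [e, a, Finset.sum_mul_sum]
    refine Finset.sum_congr rfl fun m1 _ => Finset.sum_congr rfl fun m2 _ => ?_
    rw [← pow_add]
    congr 1
    ring
  have h2 := Finset.sum_congr rfl hrhs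
  rw [h2]
  have h3 : ∑ x ∈ (Finset.range n).sigma (fun i => MSet i ×ˢ MSet (n - 1 - i)),
      (X : PowerSeries ℚ) ^
        (plateauCount x.2.1 + plateauCount x.2.2 + if x.2.1 = [Step.H] then 1 else 0)
      = ∑ i ∈ Finset.range n, ∑ m1 ∈ MSet i, ∑ m2 ∈ MSet (n - 1 - i),
        (X : PowerSeries ℚ) ^
          (plateauCount m1 + plateauCount m2 + if m1 = [Step.H] then 1 else 0) := by
    rw [Finset.sum_sigma]
    refine Finset.sum_congr rfl fun i _ => ?_
    dsimp only
    exact Finset.sum_product _ _ _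
  rw [← h3]
  refine Finset.sum_bij'
    (fun l _ => (⟨fr l.tail - 1, (l.tail.take (fr l.tail - 1), l.tail.drop (fr l.tail))⟩ :
      Σ _ : ℕ, List Step × List Step))
    (fun x _ => Step.U :: (x.2.1 ++ Step.D :: x.2.2)) ?_ ?_ ?_ ?_ ?_
  · -- hi
    intro l hl
    obtain ⟨t, rfl, hmo, hlen⟩ := mem_facts hl
    have hpos := fr_pos hmo
    have hle := fr_le hmo
    simp only [List.tail_cons, Finset.mem_sigma, Finset.mem_product]
    refine ⟨Finset.mem_range.2 (by omega), mem_MSet.2 ⟨?_, fr_take_motzkin hmo⟩,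
      mem_MSet.2 ⟨?_, fr_drop_motzkin hmo⟩⟩
    · rw [List.length_take]
      omega
    · rw [List.length_drop]
      omega
  · -- hj
    rintro ⟨i, m1, m2⟩ hx
    simp only [Finset.mem_sigma, Finset.mem_product] at hx
    obtain ⟨hi, hm1, hm2⟩ := hx
    have hi' := Finset.mem_range.1 hi
    have hl1 := (mem_MSet.1 hm1).1
    have hl2 := (mem_MSet.1 hm2).1
    refine Finset.mem_filter.2 ⟨mem_MSet.2 ⟨?_, motzkin_UD_append (mem_MSet.1 hm1).2
      (mem_MSet.1 hm2).2⟩, by simp⟩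
    simp only [List.length_cons, List.length_append]
    omega
  · -- left inverse
    intro l hl
    obtain ⟨t, rfl, hmo, hlen⟩ := mem_facts hl
    simp only [List.tail_cons]
    exact congrArg _ (fr_reconstruct hmo).symm
  · -- right inverse
    rintro ⟨i, m1, m2⟩ hx
    simp only [Finset.mem_sigma, Finset.mem_product] at hx
    obtain ⟨hi, hm1, hm2⟩ := hx
    have hl1 := (mem_MSet.1 hm1).1
    have hmo1 := (mem_MSet.1 hm1).2
    subst hl1
    have hf := fr_append (m2 := m2) hmo1
    have e2 : (m1 ++ Step.D :: m2).take (fr (m1 ++ Step.D :: m2) - 1) = m1 := by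
      rw [hf, Nat.add_sub_cancel, List.take_append_of_le_length le_rfl, List.take_length]
    have e3 : (m1 ++ Step.D :: m2).drop (fr (m1 ++ Step.D :: m2)) = m2 := by
      rw [hf, List.drop_append, List.drop_eq_nil_of_le (by omega),
        Nat.add_sub_cancel_left, List.drop_one, List.nil_append]
      rfl
    rw [hf] at e2 e3
    rw [Nat.add_sub_cancel] at e2
    simp only [List.tail_cons, hf, Nat.add_sub_cancel, e2, e3]
  · -- values
    intro l hl
    obtain ⟨t, rfl, hmo, hlen⟩ := mem_facts hl
    simp only [List.tail_cons]
    have hv : plateauCount (Step.U :: t) =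
        plateauCount (t.take (fr t - 1)) + plateauCount (t.drop (fr t)) +
          (if t.take (fr t - 1) = [Step.H] then 1 else 0) := by
      conv_lhs => rw [fr_reconstruct hmo]
      exact pc_U_append (fr_take_motzkin hmo)
    rw [hv]
    congr


lemma main_rec (n : ℕ) :
    a (n + 1) = a n + ∑ i ∈ Finset.range n, e i * a (n - 1 - i) := by
  rw [← sum_headH n, ← sum_headU n, a,
    Finset.sum_filter_add_sum_filter_not (MSet (n + 1)) (fun l => l.head? = some Step.H)]

lemma hsum (k : ℕ) :
    (∑ ij ∈ Finset.HasAntidiagonal.antidiagonal k, a ij.1 * e ij.2)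
      = ∑ i ∈ Finset.range (k + 1), e i * a (k - i) := by
  rw [Finset.Nat.sum_antidiagonal_eq_sum_range_succ_mk,
    ← Finset.sum_range_reflect (fun i => e i * a (k - i)) (k + 1)]
  refine Finset.sum_congr rfl fun j hj => ?_
  have hj' := Finset.mem_range.1 hj
  simp only [Nat.add_sub_cancel]
  rw [Nat.sub_sub_self (by omega : j ≤ k), mul_comm]

end MotzkinAux

open PowerSeries in
/-- Working in `ℚ[[x,y]]` realized as `(ℚ[[y]])[[x]]`: the outer variable is `x`
and the inner variable is `y`; `g` is the bivariate plateau generating function. -/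
theorem functional_equation
    (g : PowerSeries (PowerSeries ℚ))
    (hg : g = PowerSeries.mk fun n => PowerSeries.mk fun p => (c n p : ℚ)) :
    g = 1 + X * g + X ^ 2 * g * (g - X + X * PowerSeries.C (R := PowerSeries ℚ) X) := by
  open MotzkinAux in
  have hga : ∀ n : ℕ, PowerSeries.coeff n g = MotzkinAux.a n := by
    intro n
    rw [hg, coeff_mk]
    ext p
    rw [coeff_mk, MotzkinAux.coeff_a]
  have hE : ∀ j : ℕ, PowerSeries.coeff j (g - X + X * PowerSeries.C (R := PowerSeries ℚ) X)
      = MotzkinAux.e j := by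
    intro j
    rw [map_add, map_sub, hga j, PowerSeries.coeff_X,
      show (X : PowerSeries (PowerSeries ℚ)) * PowerSeries.C (R := PowerSeries ℚ) X
        = PowerSeries.C (R := PowerSeries ℚ) X * X from mul_comm _ _,
      PowerSeries.coeff_C_mul, PowerSeries.coeff_X]
    rcases eq_or_ne j 1 with rfl | hj
    · rw [MotzkinAux.a_one, MotzkinAux.e_one]
      simp
    · rw [MotzkinAux.e_ne hj, if_neg hj]
      ring
  have hX2 : (X : PowerSeries (PowerSeries ℚ)) ^ 2 * g *
      (g - X + X * PowerSeries.C (R := PowerSeries ℚ) X)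
      = X * (X * (g * (g - X + X * PowerSeries.C (R := PowerSeries ℚ) X))) := by ring
  refine PowerSeries.ext fun n => ?_
  rw [map_add, map_add, hX2, hga n]
  match n with
  | 0 =>
    rw [PowerSeries.coeff_zero_X_mul, PowerSeries.coeff_zero_X_mul, PowerSeries.coeff_one,
      MotzkinAux.a_zero]
    simp
  | 1 =>
    rw [PowerSeries.coeff_succ_X_mul, PowerSeries.coeff_succ_X_mul,
      PowerSeries.coeff_zero_X_mul, PowerSeries.coeff_one,
      hga 0, MotzkinAux.a_zero, MotzkinAux.a_one]
    simp
  | (k + 2) =>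
    rw [PowerSeries.coeff_succ_X_mul, PowerSeries.coeff_succ_X_mul,
      PowerSeries.coeff_succ_X_mul, PowerSeries.coeff_one, PowerSeries.coeff_mul,
      hga (k + 1)]
    have hco : ∀ ij ∈ Finset.HasAntidiagonal.antidiagonal k,
        PowerSeries.coeff ij.1 g *
          PowerSeries.coeff ij.2 (g - X + X * PowerSeries.C (R := PowerSeries ℚ) X)
          = MotzkinAux.a ij.1 * MotzkinAux.e ij.2 := by
      intro ij _
      rw [hga ij.1, hE ij.2]
    rw [Finset.sum_congr rfl hco, MotzkinAux.hsum k, MotzkinAux.main_rec (k + 1)]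
    simp only [Nat.add_sub_cancel]
    simp
end

section
/- For every integer r ≥ 1, all integers n, and all integers p ≥ 1, the counts of plateaus of length r satisfy p · c_r(n,p) = (n - (r+1)p) · c_r(n-(r+2), p-1) + (r+1)·p · c_r(n-(r+2), p). -/
/-- The number of plateaus of length `r` (occurrences of a U step, then `r`
consecutive H steps, then a D step) in a path. -/
def plateauCountR (r : ℕ) (l : List Step) : ℕ :=
  ((Finset.range l.length).filter
    (fun i => (l.drop i).take (r + 2)
      = Step.U :: (List.replicate r Step.H ++ [Step.D]))).card

/-- `cR r n p` is the number of Motzkin paths of length `n` with exactly `p`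
plateaus of length `r`; it is `0` when `n < 0` or `p < 0`. -/
noncomputable def cR (r : ℕ) (n p : ℤ) : ℕ :=
  if 0 ≤ n ∧ 0 ≤ p then
    Nat.card {l : List Step // l.length = n.toNat ∧ IsMotzkin l ∧ plateauCountR r l = p.toNat}
  else 0

namespace PlateauAux
open Finset List

instance : Fintype Step :=
  ⟨{Step.U, Step.H, Step.D}, by intro x; cases x <;> simp⟩

def B (r : ℕ) : List Step := Step.U :: (List.replicate r Step.H ++ [Step.D])

lemma B_length (r : ℕ) : (B r).length = r + 2 := by simp [B]

def occ (r : ℕ) (l : List Step) (i : ℕ) : Prop := (l.drop i).take (r + 2) = B r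

instance (r l i) : Decidable (occ r l i) := by unfold occ; infer_instance

lemma occ_iff {r : ℕ} {l : List Step} {i : ℕ} :
    occ r l i ↔ l.drop i = B r ++ l.drop (i + (r + 2)) := by
  constructor
  · intro h
    conv_lhs => rw [← List.take_append_drop (r + 2) (l.drop i)]
    rw [h, List.drop_drop]
  · intro h
    rw [occ, h, List.take_left' (B_length r)]

lemma occ_le {r : ℕ} {l : List Step} {i : ℕ} (h : occ r l i) :
    i + (r + 2) ≤ l.length := by
  have h2 := congrArg List.length (occ_iff.mp h)
  simp [B_length] at h2
  omega

lemma occ_getElem {r : ℕ} {l : List Step} {i : ℕ} (h : occ r l i)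
    {t : ℕ} (ht : t < r + 2) : l[i + t]? = (B r)[t]? := by
  have h1 : (l.drop i)[t]? = l[i + t]? := by
    rw [List.getElem?_drop]
  rw [← h1, occ_iff.mp h, List.getElem?_append_left (by rw [B_length]; omega)]

lemma B_get_ne {r d : ℕ} (h1 : 1 ≤ d) (h2 : d < r + 2) :
    (B r)[d]? ≠ some Step.U := by
  have : (B r)[d]? = (List.replicate r Step.H ++ [Step.D])[d - 1]? := by
    rcases Nat.exists_eq_add_of_le h1 with ⟨e, rfl⟩
    simp [B, Nat.add_comm 1 e]
  rw [this]
  rcases lt_or_ge (d - 1) r with hd | hd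
  · rw [List.getElem?_append_left (by simpa using hd)]
    simp [List.getElem?_replicate, hd]
  · have hdr : d - 1 = r := by omega
    subst hdr
    rw [List.getElem?_append_right (by simp)]
    simp

lemma occ_disjoint {r : ℕ} {l : List Step} {i i' : ℕ} (h : occ r l i)
    (h' : occ r l i') (hlt : i < i') : i + (r + 2) ≤ i' := by
  by_contra hc
  push_neg at hc
  have e1 := occ_getElem h (t := i' - i) (by omega)
  have e2 := occ_getElem h' (t := 0) (by omega)
  rw [Nat.add_sub_cancel' (le_of_lt hlt)] at e1
  rw [Nat.add_zero] at e2
  have : (B r)[(0:ℕ)]? = some Step.U := by simp [B]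
  exact B_get_ne (by omega) (by omega) (e1 ▸ e2 ▸ this)

def ins (r : ℕ) (l : List Step) (j : ℕ) : List Step := l.take j ++ B r ++ l.drop j

def del (r : ℕ) (l : List Step) (i : ℕ) : List Step := l.take i ++ l.drop (i + (r + 2))

lemma ins_length {r : ℕ} {l : List Step} {j : ℕ} (h : j ≤ l.length) :
    (ins r l j).length = l.length + (r + 2) := by
  simp [ins, B_length]
  omega

lemma take_len {l : List Step} {j : ℕ} (h : j ≤ l.length) : (l.take j).length = j := by
  simp; omega

lemma del_ins {r : ℕ} {l : List Step} {j : ℕ} (h : j ≤ l.length) :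
    del r (ins r l j) j = l := by
  have h1 : (l.take j ++ B r).length = j + (r + 2) := by
    simp [B_length]; omega
  rw [del, ins, List.append_assoc, List.take_left' (take_len h),
    ← List.append_assoc, List.drop_left' h1, List.take_append_drop]

lemma ins_del {r : ℕ} {l : List Step} {i : ℕ} (h : occ r l i) :
    ins r (del r l i) i = l := by
  have hle := occ_le h
  rw [ins, del, List.take_left' (take_len (by omega)), List.drop_left' (take_len (by omega)),
    List.append_assoc, ← occ_iff.mp h, List.take_append_drop]

lemma occ_ins_self {r : ℕ} {l : List Step} {j : ℕ} (h : j ≤ l.length) :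
    occ r (ins r l j) j := by
  rw [occ, ins, List.append_assoc, List.drop_left' (take_len h), List.take_left' (B_length r)]

lemma del_length {r : ℕ} {l : List Step} {i : ℕ} (h : occ r l i) :
    (del r l i).length = l.length - (r + 2) := by
  have := occ_le h
  simp [del]; omega

lemma count_B_U (r : ℕ) : (B r).count Step.U = 1 := by
  simp [B, List.count_cons, List.count_append, List.count_replicate, List.count_singleton]

lemma count_B_D (r : ℕ) : (B r).count Step.D = 1 := by
  simp [B, List.count_cons, List.count_append, List.count_replicate, List.count_singleton]

lemma count_ins (r : ℕ) (l : List Step) (j : ℕ) (s : Step) :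
    (ins r l j).count s = l.count s + (B r).count s := by
  rw [ins, List.count_append, List.count_append]
  conv_rhs => rw [← List.take_append_drop j l, List.count_append]
  omega

lemma count_take_B_le (r t : ℕ) (ht : 1 ≤ t) :
    ((B r).take t).count Step.D ≤ ((B r).take t).count Step.U := by
  rcases Nat.exists_eq_add_of_le ht with ⟨e, rfl⟩
  rw [B, Nat.add_comm 1 e, List.take_succ_cons]
  rw [List.count_cons]
  have h1 : ((List.replicate r Step.H ++ [Step.D]).take e).count Step.U = 0 := by
    refine Nat.eq_zero_of_le_zero (le_trans (List.Sublist.count_le _ (List.take_sublist _ _)) ?_)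
    simp [List.count_append, List.count_replicate]
  have h2 : ((List.replicate r Step.H ++ [Step.D]).take e).count Step.D ≤ 1 := by
    refine le_trans (List.Sublist.count_le _ (List.take_sublist _ _)) ?_
    simp [List.count_append, List.count_replicate]
  rw [List.count_cons, h1]
  simp
  omega

lemma count_take_ins (r : ℕ) (l : List Step) (j k : ℕ) (hj : j ≤ l.length) (hk : j < k)
    (s : Step) :
    ((ins r l j).take k).count s
      = (l.take j).count s + ((B r).take (k - j)).count s
        + ((l.drop j).take (k - j - (r + 2))).count s := by
  rw [ins, List.append_assoc, List.take_append, take_len hj,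
    List.take_of_length_le (by rw [take_len hj]; omega),
    List.take_append, B_length, List.count_append, List.count_append]
  omega

lemma count_take_add (l : List Step) (j u : ℕ) (s : Step) :
    (l.take (j + u)).count s = (l.take j).count s + ((l.drop j).take u).count s := by
  rw [List.take_add, List.count_append]

lemma isMotzkin_ins {r : ℕ} {l : List Step} {j : ℕ} (hj : j ≤ l.length) :
    IsMotzkin (ins r l j) ↔ IsMotzkin l := by
  constructor
  · rintro ⟨h1, h2⟩
    refine ⟨?_, ?_⟩
    · intro k
      rcases le_or_gt k j with hk | hk
      · have e : (ins r l j).take k = l.take k := by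
          rw [ins, List.append_assoc, List.take_append_of_le_length (by rw [take_len hj]; omega),
            List.take_take, min_eq_left hk]
        have := h1 k
        rwa [e] at this
      · have hK : j < k + (r + 2) := by omega
        have eU := count_take_ins r l j (k + (r + 2)) hj hK Step.U
        have eD := count_take_ins r l j (k + (r + 2)) hj hK Step.D
        have eB : (B r).take (k + (r + 2) - j) = B r :=
          List.take_of_length_le (by rw [B_length]; omega)
        rw [eB] at eU eD
        have hu : k + (r + 2) - j - (r + 2) = k - j := by omega
        rw [hu] at eU eD
        have aU := count_take_add l j (k - j) Step.U
        have aD := count_take_add l j (k - j) Step.D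
        have hjk : j + (k - j) = k := by omega
        rw [hjk] at aU aD
        have := h1 (k + (r + 2))
        rw [count_B_U] at eU; rw [count_B_D] at eD
        omega
    · have cU := count_ins r l j Step.U
      have cD := count_ins r l j Step.D
      rw [count_B_U] at cU; rw [count_B_D] at cD
      omega
  · rintro ⟨h1, h2⟩
    refine ⟨?_, ?_⟩
    · intro k
      rcases le_or_gt k j with hk | hk
      · have e : (ins r l j).take k = l.take k := by
          rw [ins, List.append_assoc, List.take_append_of_le_length (by rw [take_len hj]; omega),
            List.take_take, min_eq_left hk]
        rw [e]; exact h1 k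
      · have eU := count_take_ins r l j k hj hk Step.U
        have eD := count_take_ins r l j k hj hk Step.D
        have aU := count_take_add l j (k - j - (r + 2)) Step.U
        have aD := count_take_add l j (k - j - (r + 2)) Step.D
        have hB := count_take_B_le r (k - j) (by omega)
        have := h1 (j + (k - j - (r + 2)))
        omega
    · have cU := count_ins r l j Step.U
      have cD := count_ins r l j Step.D
      rw [count_B_U] at cU; rw [count_B_D] at cD
      omega

lemma occ_ins_iff {r : ℕ} {l : List Step} {j : ℕ} (hj : j ≤ l.length) (i' : ℕ) :
    occ r (ins r l j) i' ↔
      i' = j ∨ (i' + (r + 2) ≤ j ∧ occ r l i') ∨ (j + (r + 2) ≤ i' ∧ occ r l (i' - (r + 2))) := by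
  rcases eq_or_ne i' j with rfl | hne
  · simp [occ_ins_self hj]
  rcases le_or_gt (i' + (r + 2)) j with h1 | h1
  · -- window entirely in take part
    have e : occ r (ins r l j) i' ↔ occ r l i' := by
      rw [occ, occ, ins, List.append_assoc,
        List.drop_append_of_le_length (by rw [take_len hj]; omega),
        List.take_append_of_le_length (by rw [List.length_drop, take_len hj]; omega),
        List.drop_take, List.take_take, min_eq_left (by omega)]
    rw [e]
    constructor
    · intro h; exact Or.inr (Or.inl ⟨h1, h⟩)
    · rintro (rfl | ⟨_, h⟩ | ⟨h2, _⟩)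
      · omega
      · exact h
      · omega
  rcases le_or_gt (j + (r + 2)) i' with h2 | h2
  · have e : occ r (ins r l j) i' ↔ occ r l (i' - (r + 2)) := by
      have hlen : (l.take j ++ B r).length = j + (r + 2) := by simp [B_length]; omega
      rw [occ, occ, ins, List.drop_append, hlen,
        List.drop_eq_nil_of_le (by rw [hlen]; omega), List.nil_append,
        List.drop_drop]
      have : j + (i' - (j + (r + 2))) = i' - (r + 2) := by omega
      rw [this]
    rw [e]
    constructor
    · intro h; exact Or.inr (Or.inr ⟨h2, h⟩)
    · rintro (rfl | ⟨h3, _⟩ | ⟨_, h⟩)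
      · omega
      · omega
      · exact h
  · -- straddling cases: occ is false
    have hfalse : ¬ occ r (ins r l j) i' := by
      intro h
      rcases lt_or_gt_of_ne hne with hlt | hgt
      · -- i' < j < i' + (r+2)
        have e1 := occ_getElem h (t := j - i') (by omega)
        rw [Nat.add_sub_cancel' (le_of_lt hlt)] at e1
        have e2 : (ins r l j)[j]? = some Step.U := by
          rw [ins, List.append_assoc, List.getElem?_append_right (by rw [take_len hj])]
          rw [take_len hj, Nat.sub_self]
          have : (B r ++ l.drop j)[0]? = (B r)[0]? :=
            List.getElem?_append_left (by rw [B_length]; omega)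
          rw [this]; simp [B]
        exact B_get_ne (by omega) (by omega) (e1 ▸ e2)
      · -- j < i' < j + (r+2)
        have e1 := occ_getElem h (t := 0) (by omega)
        rw [Nat.add_zero] at e1
        have e2 : (ins r l j)[i']? = (B r)[i' - j]? := by
          rw [ins, List.append_assoc, List.getElem?_append_right (by rw [take_len hj]; omega),
            take_len hj, List.getElem?_append_left (by rw [B_length]; omega)]
        rw [e2] at e1
        have hBU : (B r)[(0:ℕ)]? = some Step.U := by simp [B]
        rw [hBU] at e1
        exact B_get_ne (r := r) (d := i' - j) (by omega) (by omega) e1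
    simp only [hfalse, false_iff]
    rintro (rfl | ⟨h3, _⟩ | ⟨h3, _⟩) <;> omega

def pset (r : ℕ) (l : List Step) : Finset ℕ :=
  (Finset.range l.length).filter (fun i => occ r l i)

lemma plateauCountR_eq (r : ℕ) (l : List Step) : plateauCountR r l = (pset r l).card := rfl

lemma mem_pset {r : ℕ} {l : List Step} {i : ℕ} : i ∈ pset r l ↔ occ r l i := by
  simp only [pset, Finset.mem_filter, Finset.mem_range, and_iff_right_iff_imp]
  intro h
  have := occ_le h
  omega

def Interior (r : ℕ) (l : List Step) (j : ℕ) : Prop :=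
  ∃ i, occ r l i ∧ i < j ∧ j < i + (r + 2)

instance (r : ℕ) (l : List Step) (j : ℕ) : Decidable (Interior r l j) :=
  decidable_of_iff (∃ i ∈ Finset.range j, occ r l i ∧ j < i + (r + 2)) (by
    constructor
    · rintro ⟨i, hi, h1, h2⟩
      exact ⟨i, h1, by simpa using hi, h2⟩
    · rintro ⟨i, h1, h2, h3⟩
      exact ⟨i, by simpa using h2, h1, h3⟩)

instance (l : List Step) : Decidable (IsMotzkin l) := by
  have i : Decidable ((∀ k ∈ Finset.range (l.length + 1),
      (l.take k).count Step.D ≤ (l.take k).count Step.U)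
      ∧ l.count Step.U = l.count Step.D) := inferInstance
  refine @decidable_of_iff _ _ ?_ i
  constructor
  · rintro ⟨h1, h2⟩
    refine ⟨fun k => ?_, h2⟩
    rcases le_or_gt k l.length with hk | hk
    · exact h1 k (by simp only [Finset.mem_range]; omega)
    · have e : l.take k = l.take l.length := by
        rw [List.take_of_length_le (by omega), List.take_length]
      rw [e]
      exact h1 l.length (by simp)
  · rintro ⟨h1, h2⟩
    exact ⟨fun k _ => h1 k, h2⟩

lemma pset_ins {r : ℕ} {l : List Step} {j : ℕ} (hj : j ≤ l.length) :
    pset r (ins r l j) =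
      insert j (((pset r l).filter (fun i => i + (r + 2) ≤ j)) ∪
        ((pset r l).filter (fun i => j ≤ i)).image (· + (r + 2))) := by
  ext i'
  simp only [mem_pset, occ_ins_iff hj, Finset.mem_insert, Finset.mem_union, Finset.mem_filter,
    Finset.mem_image]
  constructor
  · rintro (rfl | ⟨h1, h2⟩ | ⟨h1, h2⟩)
    · exact Or.inl rfl
    · exact Or.inr (Or.inl ⟨h2, h1⟩)
    · refine Or.inr (Or.inr ⟨i' - (r + 2), ⟨⟨h2, by omega⟩, by omega⟩⟩)
  · rintro (rfl | ⟨h1, h2⟩ | ⟨i, ⟨⟨h1, h2⟩, rfl⟩⟩)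
    · exact Or.inl rfl
    · exact Or.inr (Or.inl ⟨h2, h1⟩)
    · refine Or.inr (Or.inr ⟨by omega, by simpa using h1⟩)

lemma card_pset_ins {r : ℕ} {l : List Step} {j : ℕ} (hj : j ≤ l.length) :
    (pset r (ins r l j)).card =
      1 + ((pset r l).filter (fun i => i + (r + 2) ≤ j)).card
        + ((pset r l).filter (fun i => j ≤ i)).card := by
  rw [pset_ins hj]
  rw [Finset.card_insert_of_notMem, Finset.card_union_of_disjoint,
    Finset.card_image_of_injective _ (add_left_injective _)]
  · omega
  · rw [Finset.disjoint_left]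
    intro a h1 h2
    simp only [Finset.mem_image, Finset.mem_filter] at h1 h2
    obtain ⟨b, ⟨⟨_, hb⟩, rfl⟩⟩ := h2
    omega
  · simp only [Finset.mem_union, Finset.mem_filter, Finset.mem_image, not_or]
    constructor
    · rintro ⟨_, h⟩; omega
    · rintro ⟨b, ⟨⟨_, hb⟩, h⟩⟩; omega

lemma pset_partition (r : ℕ) (l : List Step) (j : ℕ) :
    (pset r l).card =
      ((pset r l).filter (fun i => i + (r + 2) ≤ j)).card
        + ((pset r l).filter (fun i => j ≤ i)).card
        + ((pset r l).filter (fun i => i < j ∧ j < i + (r + 2))).card := by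
  have h1 := Finset.card_filter_add_card_filter_not
    (s := pset r l) (p := fun i => i + (r + 2) ≤ j)
  have h2 := Finset.card_filter_add_card_filter_not
    (s := (pset r l).filter (fun i => ¬ (i + (r + 2) ≤ j))) (p := fun i => j ≤ i)
  rw [Finset.filter_filter, Finset.filter_filter] at h2
  have e1 : (pset r l).filter (fun i => ¬(i + (r + 2) ≤ j) ∧ j ≤ i)
      = (pset r l).filter (fun i => j ≤ i) := by
    apply Finset.filter_congr; intro x _; constructor
    · rintro ⟨_, h⟩; exact h
    · intro h; exact ⟨by omega, h⟩
  have e2 : (pset r l).filter (fun i => ¬(i + (r + 2) ≤ j) ∧ ¬ j ≤ i)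
      = (pset r l).filter (fun i => i < j ∧ j < i + (r + 2)) := by
    apply Finset.filter_congr; intro x _; constructor
    · rintro ⟨h1', h2'⟩; exact ⟨by omega, by omega⟩
    · rintro ⟨h1', h2'⟩; exact ⟨by omega, by omega⟩
  rw [e1, e2] at h2
  omega

lemma card_interior_filter_le_one (r : ℕ) (l : List Step) (j : ℕ) :
    ((pset r l).filter (fun i => i < j ∧ j < i + (r + 2))).card ≤ 1 := by
  rw [Finset.card_le_one]
  intro a ha b hb
  simp only [Finset.mem_filter, mem_pset] at ha hb
  obtain ⟨ha1, ha2, ha3⟩ := ha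
  obtain ⟨hb1, hb2, hb3⟩ := hb
  by_contra hne
  rcases lt_or_gt_of_ne hne with h | h
  · have := occ_disjoint ha1 hb1 h; omega
  · have := occ_disjoint hb1 ha1 h; omega

lemma interior_filter_card_pos {r : ℕ} {l : List Step} {j : ℕ} (h : Interior r l j) :
    ((pset r l).filter (fun i => i < j ∧ j < i + (r + 2))).card = 1 := by
  · obtain ⟨i, hi1, hi2, hi3⟩ := h
    have hne : ((pset r l).filter (fun i => i < j ∧ j < i + (r + 2))).Nonempty :=
      ⟨i, by simp only [Finset.mem_filter, mem_pset]; exact ⟨hi1, hi2, hi3⟩⟩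
    have := card_interior_filter_le_one r l j
    have := Finset.card_pos.mpr hne
    omega

lemma interior_filter_card_zero {r : ℕ} {l : List Step} {j : ℕ} (h : ¬ Interior r l j) :
    ((pset r l).filter (fun i => i < j ∧ j < i + (r + 2))).card = 0 := by
  · rw [Finset.card_eq_zero, Finset.filter_eq_empty_iff]
    intro i hi
    rw [mem_pset] at hi
    rintro ⟨h1, h2⟩
    exact h ⟨i, hi, h1, h2⟩

lemma card_pset_ins_interior {r : ℕ} {l : List Step} {j : ℕ} (hj : j ≤ l.length)
    (h : Interior r l j) : (pset r (ins r l j)).card = (pset r l).card := by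
  have h1 := card_pset_ins (r := r) hj
  have h2 := pset_partition r l j
  rw [interior_filter_card_pos h] at h2
  omega

lemma card_pset_ins_not_interior {r : ℕ} {l : List Step} {j : ℕ} (hj : j ≤ l.length)
    (h : ¬ Interior r l j) : (pset r (ins r l j)).card = (pset r l).card + 1 := by
  have h1 := card_pset_ins (r := r) hj
  have h2 := pset_partition r l j
  rw [interior_filter_card_zero h] at h2
  omega

lemma card_interior {r m : ℕ} {l : List Step} (hlen : l.length = m) :
    ((Finset.range (m + 1)).filter (fun j => Interior r l j)).card
      = (r + 1) * (pset r l).card := by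
  have heq : (Finset.range (m + 1)).filter (fun j => Interior r l j)
      = (pset r l).biUnion (fun i => Finset.Ioo i (i + (r + 2))) := by
    ext j
    simp only [Finset.mem_filter, Finset.mem_range, Finset.mem_biUnion, mem_pset,
      Finset.mem_Ioo]
    constructor
    · rintro ⟨_, i, h1, h2, h3⟩
      exact ⟨i, h1, h2, h3⟩
    · rintro ⟨i, h1, h2, h3⟩
      have := occ_le h1
      exact ⟨by omega, i, h1, h2, h3⟩
  rw [heq, Finset.card_biUnion]
  · have e : ∀ i ∈ pset r l, (Finset.Ioo i (i + (r + 2))).card = r + 1 := by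
      intro i _
      rw [Nat.card_Ioo]
      omega
    rw [Finset.sum_congr rfl e, Finset.sum_const, smul_eq_mul, mul_comm]
  · intro a ha b hb hne
    rw [Finset.mem_coe, mem_pset] at ha hb
    simp only [Finset.disjoint_left, Finset.mem_Ioo]
    rintro x ⟨h1, h2⟩ ⟨h3, h4⟩
    rcases lt_or_gt_of_ne hne with h | h
    · have := occ_disjoint ha hb h; omega
    · have := occ_disjoint hb ha h; omega

lemma card_not_interior {r m : ℕ} {l : List Step} (hlen : l.length = m) :
    ((Finset.range (m + 1)).filter (fun j => ¬ Interior r l j)).card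
      = (m + 1) - (r + 1) * (pset r l).card := by
  have h := Finset.card_filter_add_card_filter_not
    (s := Finset.range (m + 1)) (p := fun j => Interior r l j)
  rw [card_interior hlen, Finset.card_range] at h
  omega

lemma interior_card_le {r m : ℕ} {l : List Step} (hlen : l.length = m) :
    (r + 1) * (pset r l).card ≤ m + 1 := by
  calc (r + 1) * (pset r l).card
      = ((Finset.range (m + 1)).filter (fun j => Interior r l j)).card :=
        (card_interior hlen).symm
    _ ≤ (Finset.range (m + 1)).card := Finset.card_filter_le _ _
    _ = m + 1 := Finset.card_range _

def lists (m : ℕ) : Finset (List Step) :=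
  (Finset.univ : Finset (Fin m → Step)).image (fun f => List.ofFn f)

lemma mem_lists {m : ℕ} {l : List Step} : l ∈ lists m ↔ l.length = m := by
  simp only [lists, Finset.mem_image, Finset.mem_univ, true_and]
  constructor
  · rintro ⟨f, rfl⟩; simp
  · rintro h
    subst h
    exact ⟨l.get, List.ofFn_get l⟩

def MP (r m p : ℕ) : Finset (List Step) :=
  (lists m).filter (fun l => IsMotzkin l ∧ plateauCountR r l = p)

lemma mem_MP {r m p : ℕ} {l : List Step} :
    l ∈ MP r m p ↔ l.length = m ∧ IsMotzkin l ∧ plateauCountR r l = p := by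
  rw [MP, Finset.mem_filter, mem_lists]

variable (r m q : ℕ)

def S : Finset ((_ : List Step) × ℕ) :=
  (MP r (m + (r + 2)) q).sigma (fun M => pset r M)

def T1 : Finset ((_ : List Step) × ℕ) :=
  (MP r m (q - 1)).sigma (fun l => (Finset.range (m + 1)).filter (fun j => ¬ Interior r l j))

def T2 : Finset ((_ : List Step) × ℕ) :=
  (MP r m q).sigma (fun l => (Finset.range (m + 1)).filter (fun j => Interior r l j))

lemma card_S : (S r m q).card = q * (MP r (m + (r + 2)) q).card := by
  rw [S, Finset.card_sigma]
  have e : ∀ M ∈ MP r (m + (r + 2)) q, (pset r M).card = q := by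
    intro M hM
    rw [mem_MP] at hM
    rw [← plateauCountR_eq]
    exact hM.2.2
  rw [Finset.sum_congr rfl e, Finset.sum_const, smul_eq_mul, mul_comm]

lemma card_T2 : (T2 r m q).card = (r + 1) * q * (MP r m q).card := by
  rw [T2, Finset.card_sigma]
  have e : ∀ l ∈ MP r m q,
      ((Finset.range (m + 1)).filter (fun j => Interior r l j)).card = (r + 1) * q := by
    intro l hl
    rw [mem_MP] at hl
    rw [card_interior hl.1, ← plateauCountR_eq, hl.2.2]
  rw [Finset.sum_congr rfl e, Finset.sum_const, smul_eq_mul, mul_comm]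

lemma card_T1 : (T1 r m q).card = ((m + 1) - (r + 1) * (q - 1)) * (MP r m (q - 1)).card := by
  rw [T1, Finset.card_sigma]
  have e : ∀ l ∈ MP r m (q - 1),
      ((Finset.range (m + 1)).filter (fun j => ¬ Interior r l j)).card
        = (m + 1) - (r + 1) * (q - 1) := by
    intro l hl
    rw [mem_MP] at hl
    rw [card_not_interior hl.1, ← plateauCountR_eq, hl.2.2]
  rw [Finset.sum_congr rfl e, Finset.sum_const, smul_eq_mul, mul_comm]

lemma coeff_bound (h : (MP r m (q - 1)).Nonempty) : (r + 1) * (q - 1) ≤ m + 1 := by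
  obtain ⟨l, hl⟩ := h
  rw [mem_MP] at hl
  have := interior_card_le (r := r) hl.1
  rw [← plateauCountR_eq, hl.2.2] at this
  exact this

lemma disjoint_T : Disjoint (T1 r m q) (T2 r m q) := by
  rw [Finset.disjoint_left]
  rintro ⟨l, j⟩ h1 h2
  rw [T1, Finset.mem_sigma, Finset.mem_filter] at h1
  rw [T2, Finset.mem_sigma, Finset.mem_filter] at h2
  exact h1.2.2 h2.2.2

lemma card_S_eq (hq : 1 ≤ q) : (S r m q).card = (T1 r m q).card + (T2 r m q).card := by
  rw [← Finset.card_union_of_disjoint (disjoint_T r m q)]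
  refine Finset.card_bij' (fun a _ => ⟨del r a.1 a.2, a.2⟩)
    (fun b _ => ⟨ins r b.1 b.2, b.2⟩) ?_ ?_ ?_ ?_
  · -- forward membership
    rintro ⟨M, i⟩ ha
    rw [S, Finset.mem_sigma, mem_MP] at ha
    dsimp only at ha ⊢
    obtain ⟨⟨hlen, hMz, hcnt⟩, hocc⟩ := ha
    rw [mem_pset] at hocc
    have hle := occ_le hocc
    have hdl : (del r M i).length = m := by rw [del_length hocc, hlen]; omega
    have hil : i ≤ (del r M i).length := by rw [hdl]; omega
    have hMi : M = ins r (del r M i) i := (ins_del hocc).symm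
    have hMz' : IsMotzkin (del r M i) := (isMotzkin_ins hil).mp (hMi ▸ hMz)
    have hcnt' : (pset r (ins r (del r M i) i)).card = q := by
      rw [← hMi, ← plateauCountR_eq, hcnt]
    simp only [Finset.mem_union]
    by_cases hInt : Interior r (del r M i) i
    · right
      rw [T2, Finset.mem_sigma, mem_MP, Finset.mem_filter, Finset.mem_range]
      dsimp only
      rw [card_pset_ins_interior hil hInt] at hcnt'
      exact ⟨⟨hdl, hMz', by rw [plateauCountR_eq]; exact hcnt'⟩, by omega, hInt⟩
    · left
      rw [T1, Finset.mem_sigma, mem_MP, Finset.mem_filter, Finset.mem_range]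
      dsimp only
      rw [card_pset_ins_not_interior hil hInt] at hcnt'
      refine ⟨⟨hdl, hMz', by rw [plateauCountR_eq]; omega⟩, by omega, hInt⟩
  · -- backward membership
    rintro ⟨l, j⟩ hb
    simp only [Finset.mem_union] at hb
    dsimp only at hb ⊢
    rw [S, Finset.mem_sigma, mem_MP]
    dsimp only
    rcases hb with hb | hb
    · rw [T1, Finset.mem_sigma, mem_MP, Finset.mem_filter, Finset.mem_range] at hb
      dsimp only at hb
      obtain ⟨⟨hlen, hMz, hcnt⟩, hjr, hInt⟩ := hb
      have hjl : j ≤ l.length := by omega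
      refine ⟨⟨by rw [ins_length hjl, hlen], (isMotzkin_ins hjl).mpr hMz, ?_⟩, ?_⟩
      · rw [plateauCountR_eq, card_pset_ins_not_interior hjl hInt, ← plateauCountR_eq, hcnt]
        omega
      · rw [mem_pset]
        exact occ_ins_self hjl
    · rw [T2, Finset.mem_sigma, mem_MP, Finset.mem_filter, Finset.mem_range] at hb
      dsimp only at hb
      obtain ⟨⟨hlen, hMz, hcnt⟩, hjr, hInt⟩ := hb
      have hjl : j ≤ l.length := by omega
      refine ⟨⟨by rw [ins_length hjl, hlen], (isMotzkin_ins hjl).mpr hMz, ?_⟩, ?_⟩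
      · rw [plateauCountR_eq, card_pset_ins_interior hjl hInt, ← plateauCountR_eq, hcnt]
      · rw [mem_pset]
        exact occ_ins_self hjl
  · -- left inverse
    rintro ⟨M, i⟩ ha
    rw [S, Finset.mem_sigma, mem_pset] at ha
    dsimp only at ha ⊢
    rw [ins_del ha.2]
  · -- right inverse
    rintro ⟨l, j⟩ hb
    simp only [Finset.mem_union] at hb
    dsimp only at hb ⊢
    have hjl : j ≤ l.length := by
      rcases hb with hb | hb
      · rw [T1, Finset.mem_sigma, mem_MP, Finset.mem_filter, Finset.mem_range] at hb
        dsimp only at hb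
        omega
      · rw [T2, Finset.mem_sigma, mem_MP, Finset.mem_filter, Finset.mem_range] at hb
        dsimp only at hb
        omega
    rw [del_ins hjl]

lemma main_nat (hq : 1 ≤ q) :
    q * (MP r (m + (r + 2)) q).card
      = ((m + 1) - (r + 1) * (q - 1)) * (MP r m (q - 1)).card
        + (r + 1) * q * (MP r m q).card := by
  rw [← card_S, card_S_eq r m q hq, card_T1, card_T2]

lemma MP_empty (p : ℕ) (hp : 1 ≤ p) (hm : m < r + 2) : MP r m p = ∅ := by
  rw [Finset.eq_empty_iff_forall_notMem]
  intro l hl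
  rw [mem_MP] at hl
  obtain ⟨hlen, _, hcnt⟩ := hl
  have : (pset r l).Nonempty := by
    rw [← Finset.card_pos, ← plateauCountR_eq, hcnt]; omega
  obtain ⟨i, hi⟩ := this
  rw [mem_pset] at hi
  have := occ_le hi
  omega

lemma cR_eq (p : ℕ) : cR r (m : ℤ) (p : ℤ) = (MP r m p).card := by
  rw [cR, if_pos ⟨Int.natCast_nonneg m, Int.natCast_nonneg p⟩]
  simp only [Int.toNat_natCast]
  rw [← Nat.card_eq_finsetCard]
  exact Nat.card_congr (Equiv.subtypeEquivRight (fun l => mem_MP.symm))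

end PlateauAux

theorem plateauR_recursion (r : ℕ) (hr : 1 ≤ r) (n p : ℤ) (hp : 1 ≤ p) :
    p * (cR r n p : ℤ)
      = (n - (r + 1) * p) * (cR r (n - (r + 2)) (p - 1) : ℤ)
        + (r + 1) * p * (cR r (n - (r + 2)) p : ℤ) := by
  classical
  by_cases hn : 0 ≤ n - ((r : ℤ) + 2)
  · have hn0 : 0 ≤ n := by omega
    set m : ℕ := (n - ((r : ℤ) + 2)).toNat with hm
    set q : ℕ := p.toNat with hqdef
    have hq1 : 1 ≤ q := by omega
    have e2 : n - ((r : ℤ) + 2) = ((m : ℕ) : ℤ) := by omega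
    have e1 : n = ((m + (r + 2) : ℕ) : ℤ) := by push_cast; omega
    have e3 : p = ((q : ℕ) : ℤ) := by omega
    have e4 : p - 1 = ((q - 1 : ℕ) : ℤ) := by omega
    rw [e2, e4, e1, e3, PlateauAux.cR_eq, PlateauAux.cR_eq, PlateauAux.cR_eq]
    have H := PlateauAux.main_nat r m q hq1
    rcases Finset.eq_empty_or_nonempty (PlateauAux.MP r m (q - 1)) with he | hne
    · rw [he] at H ⊢
      simp only [Finset.card_empty, Nat.mul_zero, Nat.zero_add, Nat.cast_zero, mul_zero,
        zero_add] at H ⊢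
      exact_mod_cast H
    · have hb := PlateauAux.coeff_bound r m q hne
      have H' : ((q : ℕ) : ℤ) * ((PlateauAux.MP r (m + (r + 2)) q).card : ℤ)
          = (((m + 1) - (r + 1) * (q - 1) : ℕ) : ℤ) * ((PlateauAux.MP r m (q - 1)).card : ℤ)
            + ((r : ℤ) + 1) * (q : ℤ) * ((PlateauAux.MP r m q).card : ℤ) := by
        exact_mod_cast congrArg (Nat.cast : ℕ → ℤ) H
      have hcast : (((m + 1) - (r + 1) * (q - 1) : ℕ) : ℤ)
          = ((m + (r + 2) : ℕ) : ℤ) - ((r : ℤ) + 1) * ((q : ℕ) : ℤ) := by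
        rw [Nat.cast_sub hb]
        have e5 : ((q - 1 : ℕ) : ℤ) = ((q : ℕ) : ℤ) - 1 := by omega
        push_cast [e5]
        ring
      rw [hcast] at H'
      exact H'
  · have hz1 : cR r (n - ((r : ℤ) + 2)) (p - 1) = 0 := by
      rw [cR, if_neg]
      rintro ⟨h1, _⟩
      exact hn h1
    have hz2 : cR r (n - ((r : ℤ) + 2)) p = 0 := by
      rw [cR, if_neg]
      rintro ⟨h1, _⟩
      exact hn h1
    rw [hz1, hz2]
    rcases le_or_gt 0 n with h | h
    · have hz3 : cR r n p = 0 := by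
        rw [show n = ((n.toNat : ℕ) : ℤ) by omega, show p = ((p.toNat : ℕ) : ℤ) by omega,
          PlateauAux.cR_eq, PlateauAux.MP_empty r n.toNat p.toNat (by omega) (by omega),
          Finset.card_empty]
      rw [hz3]
      simp
    · have hz3 : cR r n p = 0 := by
        rw [cR, if_neg]
        rintro ⟨h1, _⟩
        omega
      rw [hz3]
      simp
end

section
/- Fix an integer r ≥ 1 and let F(x) = Σ_{n≥0} c_r(n,0) x^n ∈ ℚ[[x]] be the generating function for Motzkin paths with no plateaus of length r. Then F(x) = 1 + x·F(x) + x²·F(x)·(F(x) - x^r); equivalently, (2x²·F(x) - (1 - x + x^{r+2}))² = (1 - x + x^{r+2})² - 4x² as formal power series. -/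
instance : Fintype Step :=
  ⟨{Step.U, Step.H, Step.D}, by intro x; cases x <;> simp⟩

instance (l : List Step) : Decidable (IsMotzkin l) := by
  have : IsMotzkin l ↔
      ((∀ k ∈ Finset.range (l.length + 1),
        (l.take k).count Step.D ≤ (l.take k).count Step.U) ∧
        l.count Step.U = l.count Step.D) := by
    unfold IsMotzkin
    constructor
    · rintro ⟨h1, h2⟩; exact ⟨fun k _ => h1 k, h2⟩
    · rintro ⟨h1, h2⟩
      refine ⟨fun k => ?_, h2⟩
      rcases le_or_gt k l.length with hk | hk
      · exact h1 k (Finset.mem_range.2 (by omega))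
      · rw [List.take_of_length_le hk.le]
        simpa using h1 l.length (Finset.mem_range.2 (by omega))
  exact decidable_of_iff _ this.symm

/-- the finset of lists of `Step` of length `n` -/
def listsLen (n : ℕ) : Finset (List Step) :=
  (Finset.univ : Finset (List.Vector Step n)).map
    ⟨List.Vector.toList, List.Vector.toList_injective⟩

lemma mem_listsLen {n : ℕ} {l : List Step} : l ∈ listsLen n ↔ l.length = n := by
  rw [listsLen, Finset.mem_map]
  simp only [Finset.mem_univ, true_and,
    Function.Embedding.coeFn_mk]
  constructor
  · rintro ⟨v, rfl⟩; exact v.2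
  · intro h; exact ⟨⟨l, h⟩, rfl⟩

/-- avoiders -/
def A (r n : ℕ) : Finset (List Step) :=
  (listsLen n).filter (fun l => IsMotzkin l ∧ plateauCountR r l = 0)

lemma mem_A {r n : ℕ} {l : List Step} :
    l ∈ A r n ↔ l.length = n ∧ IsMotzkin l ∧ plateauCountR r l = 0 := by
  simp [A, mem_listsLen]

lemma cR_eq_card (r n : ℕ) : cR r n 0 = (A r n).card := by
  rw [cR, if_pos (by constructor <;> simp)]
  rw [← Nat.card_eq_finsetCard]
  apply Nat.card_congr
  exact Equiv.subtypeEquivRight (by intro l; simp [mem_A])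

def pat (r : ℕ) : List Step := Step.U :: (List.replicate r Step.H ++ [Step.D])

lemma pat_length (r : ℕ) : (pat r).length = r + 2 := by simp [pat]

lemma plateau_sum (r : ℕ) (l : List Step) :
    plateauCountR r l
      = ∑ i ∈ Finset.range l.length, (if (l.drop i).take (r + 2) = pat r then 1 else 0) := by
  rw [plateauCountR, Finset.card_filter]; rfl

lemma plateau_nil (r : ℕ) : plateauCountR r [] = 0 := by simp [plateauCountR]

lemma plateau_cons (r : ℕ) (x : Step) (l : List Step) :
    plateauCountR r (x :: l)
      = (if (x :: l).take (r + 2) = pat r then 1 else 0) + plateauCountR r l := by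
  rw [plateau_sum, plateau_sum, List.length_cons, Finset.sum_range_succ']
  simp only [List.drop_succ_cons, List.drop_zero]
  ring

lemma no_D_of_short_prefix (r : ℕ) {c m : List Step}
    (h : (c ++ m).take (r + 2) = pat r) (hlen : c.length ≤ r + 1) : Step.D ∉ c := by
  intro hD
  have hc : c = (pat r).take c.length := by
    rw [← h, List.take_take, min_eq_left (by omega), List.take_left]
  have h1 : (pat r).take (r+1) = Step.U :: List.replicate r Step.H := by
    simp [pat, List.take_append_of_le_length]
  have h2 : c = ((pat r).take (r+1)).take c.length := by
    rw [List.take_take, min_eq_left hlen]; exact hc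
  rw [h1] at h2
  have : Step.D ∈ Step.U :: List.replicate r Step.H :=
    (List.take_subset _ _) (h2 ▸ hD)
  simp [List.mem_replicate] at this

lemma take_append_eq_pat_iff (r : ℕ) {c m : List Step} (hD : Step.D ∈ c) :
    (c ++ m).take (r + 2) = pat r ↔ c.take (r + 2) = pat r := by
  rcases le_or_gt (r + 2) c.length with hlen | hlen
  · rw [List.take_append_of_le_length hlen]
  · constructor
    · intro h; exact absurd hD (no_D_of_short_prefix r h (by omega))
    · intro h
      have := congrArg List.length h
      rw [List.length_take, pat_length] at this
      omega

lemma plateau_append_of_last_D (r : ℕ) :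
    ∀ (c m : List Step), c.getLast? = some Step.D →
      plateauCountR r (c ++ m) = plateauCountR r c + plateauCountR r m := by
  intro c
  induction c with
  | nil => intro m h; simp at h
  | cons x c' ih =>
    intro m h
    cases c' with
    | nil =>
      simp only [List.getLast?_singleton, Option.some.injEq] at h
      subst h
      rw [List.cons_append, plateau_cons, plateau_cons, plateau_nil]
      have h0 : ∀ (t : List Step), ¬ (Step.D :: t).take (r+2) = pat r := by
        intro t ht
        rw [List.take_cons (by omega)] at ht
        simp [pat] at ht
      rw [if_neg (h0 _), if_neg (h0 _)]
      simp
    | cons y c'' =>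
      rw [List.getLast?_cons_cons] at h
      rw [List.cons_append, plateau_cons, plateau_cons, ih m h]
      have hD : Step.D ∈ x :: y :: c'' := by
        obtain ⟨hne, heq⟩ := List.mem_getLast?_eq_getLast (l := y :: c'') (by rw [h]; rfl)
        right; exact heq ▸ List.getLast_mem hne
      have hiff := take_append_eq_pat_iff (m := m) r hD
      simp only [List.cons_append] at hiff ⊢
      simp only [hiff]
      ring


lemma motzkin_no_suffix_UH (r : ℕ) {m : List Step} (hm : IsMotzkin m) (i : ℕ) :
    m.drop i ≠ Step.U :: List.replicate r Step.H := by
  intro heq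
  have hsplit := List.take_append_drop i m
  have hU : m.count Step.U = (m.take i).count Step.U + 1 := by
    conv_lhs => rw [← hsplit]
    rw [List.count_append, heq]
    simp [List.count_replicate]
  have hD : m.count Step.D = (m.take i).count Step.D := by
    conv_lhs => rw [← hsplit]
    rw [List.count_append, heq]
    simp [List.count_replicate]
  have := hm.1 i
  have := hm.2
  omega

lemma motzkin_no_prefix_HD (r : ℕ) {m : List Step} (hm : IsMotzkin m)
    (h : m.take (r + 1) = List.replicate r Step.H ++ [Step.D]) : False := by
  have := hm.1 (r + 1)
  rw [h] at this
  simp [List.count_replicate, List.count_append] at this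

lemma plateau_append_D (r : ℕ) {m : List Step} (hm : IsMotzkin m) :
    plateauCountR r (m ++ [Step.D]) = plateauCountR r m := by
  rw [plateau_sum, plateau_sum, List.length_append, List.length_singleton,
    Finset.sum_range_succ]
  have hlast : (if ((m ++ [Step.D]).drop m.length).take (r + 2) = pat r then 1 else 0) = 0 := by
    rw [List.drop_append_of_le_length le_rfl, List.drop_length]
    rw [if_neg]
    intro h
    have := congrArg List.length h
    simp [pat_length] at this
  rw [hlast, add_zero]
  apply Finset.sum_congr rfl
  intro i hi
  rw [Finset.mem_range] at hi
  rw [List.drop_append_of_le_length hi.le]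
  rcases le_or_gt (r + 2) (m.length - i) with hcase | hcase
  · rw [List.take_append_of_le_length (by simp; omega)]
  · have hlen1 : (m.drop i).length = m.length - i := by simp
    have hr1 : ¬ (m.drop i).take (r + 2) = pat r := by
      intro h
      have := congrArg List.length h
      rw [List.length_take, pat_length, hlen1] at this
      omega
    rw [if_neg hr1, if_neg]
    intro h
    rcases lt_or_eq_of_le (Nat.le_of_lt_succ (by omega : m.length - i < r + 2)) with h2 | h2
    · have := congrArg List.length h
      rw [List.length_take, pat_length] at this
      simp at this
      omega
    · -- m.length - i = r + 1, whole thing has length r+2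
      rw [List.take_of_length_le (by simp; omega)] at h
      have hpat : pat r = (Step.U :: List.replicate r Step.H) ++ [Step.D] := by simp [pat]
      rw [hpat] at h
      have := List.append_inj_left h (by simp [hlen1]; omega)
      exact motzkin_no_suffix_UH r hm i this

lemma head_pat_iff (r : ℕ) {m m' : List Step} (hm : IsMotzkin m) :
    (Step.U :: (m ++ Step.D :: m')).take (r + 2) = pat r ↔ m = List.replicate r Step.H := by
  rw [List.take_cons (by omega)]
  rw [pat, List.cons.injEq]
  simp only [true_and]
  have hr2 : r + 2 - 1 = r + 1 := by omega
  rw [hr2]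
  constructor
  · intro h
    rcases le_or_gt (r + 1) m.length with hc | hc
    · rw [List.take_append_of_le_length hc] at h
      exact absurd h (fun hh => (motzkin_no_prefix_HD r hm hh))
    · rw [List.take_append, List.take_of_length_le (by omega),
        List.take_cons (by omega)] at h
      have hmval : m = List.replicate m.length Step.H := by
        have := congrArg (List.take m.length) h
        rw [List.take_left, List.take_append_of_le_length (by simp; omega),
          List.take_replicate, min_eq_left (by omega)] at this
        exact this
      have hmlen : m.length = r := by
        by_contra hne
        have hlt : m.length < r := by omega
        have hgE := congrArg (fun l => l.getD m.length Step.U) h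
        simp only [List.getD_eq_getElem?_getD] at hgE
        rw [List.getElem?_append_right le_rfl, Nat.sub_self] at hgE
        rw [List.getElem?_append_left (by simp; omega)] at hgE
        simp [List.getElem?_replicate, hlt] at hgE
      rw [hmval, hmlen]
  · intro h
    subst h
    rw [List.take_append, List.take_of_length_le (by simp),
      List.take_cons (by simp)]
    simp

lemma plateau_UmD (r : ℕ) {m : List Step} (m' : List Step) (hm : IsMotzkin m) :
    plateauCountR r (Step.U :: m ++ Step.D :: m')
      = plateauCountR r m + plateauCountR r m'
        + (if m = List.replicate r Step.H then 1 else 0) := by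
  have hsplit : Step.U :: m ++ Step.D :: m' = ((Step.U :: m) ++ [Step.D]) ++ m' := by simp
  rw [hsplit, plateau_append_of_last_D r _ _ (by rw [List.getLast?_concat])]
  have h2 : (Step.U :: m) ++ [Step.D] = Step.U :: (m ++ Step.D :: []) := by simp
  rw [h2, plateau_cons]
  have h3 : plateauCountR r (m ++ Step.D :: []) = plateauCountR r m :=
    plateau_append_D r hm
  rw [h3]
  have h4 : ((Step.U :: (m ++ Step.D :: [])).take (r+2) = pat r)
      ↔ m = List.replicate r Step.H := head_pat_iff r hm
  simp only [h4]
  ring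

lemma count_take_UmD (m m' : List Step) (s : Step) (k : ℕ) :
    ((Step.U :: m ++ Step.D :: m').take k).count s =
      if k = 0 then 0
      else if k ≤ m.length + 1 then (if s = Step.U then 1 else 0) + (m.take (k-1)).count s
      else (if s = Step.U then 1 else 0) + m.count s + (if s = Step.D then 1 else 0)
        + (m'.take (k - m.length - 2)).count s := by
  rcases Nat.eq_zero_or_pos k with rfl | hk
  · simp
  rw [if_neg (by omega)]
  obtain ⟨j, rfl⟩ : ∃ j, k = j + 1 := ⟨k - 1, by omega⟩
  rcases le_or_gt (j+1) (m.length + 1) with hc | hc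
  · rw [if_pos hc, List.take_append_of_le_length (by simp; omega),
      List.take_cons (by omega)]
    simp only [Nat.add_sub_cancel]
    cases s <;> simp [List.count_cons] <;> omega
  · rw [if_neg (by omega), List.take_append,
      List.take_of_length_le (by simp; omega), List.take_cons (by simp; omega)]
    simp only [List.length_cons]
    have harith : j + 1 - (m.length + 1) - 1 = j + 1 - m.length - 2 := by omega
    rw [harith]
    cases s <;> simp [List.count_cons, List.count_append] <;> ring

lemma motzkin_UmD {m m' : List Step} (hm : IsMotzkin m) (hm' : IsMotzkin m') :
    IsMotzkin (Step.U :: m ++ Step.D :: m') := by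
  constructor
  · intro k
    rw [count_take_UmD, count_take_UmD]
    rcases Nat.eq_zero_or_pos k with rfl | hk
    · simp
    rw [if_neg (show ¬ k = 0 by omega), if_neg (show ¬ k = 0 by omega)]
    rcases le_or_gt k (m.length + 1) with hc | hc
    · rw [if_pos hc, if_pos hc]
      have := hm.1 (k-1)
      simp
      omega
    · rw [if_neg (show ¬ k ≤ m.length + 1 by omega),
        if_neg (show ¬ k ≤ m.length + 1 by omega)]
      have h1 := hm'.1 (k - m.length - 2)
      have h2 := hm.2
      simp
      omega
  · have h2 := hm.2
    have h3 := hm'.2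
    simp [List.count_append, List.count_cons]
    omega

lemma motzkin_decomp {t : List Step} (h : IsMotzkin (Step.U :: t)) :
    ∃ m m', t = m ++ Step.D :: m' ∧ IsMotzkin m ∧ IsMotzkin m' := by
  have hex : ∃ k, (t.take k).count Step.D = (t.take k).count Step.U + 1 := by
    refine ⟨t.length, ?_⟩
    rw [List.take_length]
    have := h.2
    simp [List.count_cons] at this
    omega
  classical
  set k₀ := Nat.find hex with hk₀def
  have hk₀ := Nat.find_spec hex
  rw [← hk₀def] at hk₀
  have hmin : ∀ j < k₀, ¬ (t.take j).count Step.D = (t.take j).count Step.U + 1 :=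
    fun j hj => Nat.find_min hex hj
  have hpre : ∀ j, (t.take j).count Step.D ≤ (t.take j).count Step.U + 1 := by
    intro j
    have := h.1 (j + 1)
    rw [List.take_cons (by omega)] at this
    simp [List.count_cons] at this
    omega
  have hk₀pos : 0 < k₀ := by
    rcases Nat.eq_zero_or_pos k₀ with h0 | h0
    · exfalso; rw [h0] at hk₀; simp at hk₀
    · exact h0
  have hk₀len : k₀ ≤ t.length := by
    by_contra hcon
    refine hmin t.length (by omega) ?_
    have e1 : t.take t.length = t.take k₀ := by
      rw [List.take_length, List.take_of_length_le (by omega)]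
    rw [e1]; exact hk₀
  have hstep : t.take k₀ = t.take (k₀ - 1) ++ [t[k₀-1]'(by omega)] := by
    conv_lhs => rw [show k₀ = (k₀ - 1) + 1 by omega]
    rw [List.take_succ, List.getElem?_eq_getElem (by omega)]
    rfl
  have hprev : (t.take (k₀-1)).count Step.D ≤ (t.take (k₀-1)).count Step.U :=
    by have := hmin (k₀-1) (by omega); have := hpre (k₀-1); omega
  have hgetD : t[k₀-1]'(by omega) = Step.D := by
    rcases hget : t[k₀-1]'(by omega) with _ | _ | _
    · exfalso
      rw [hstep, hget] at hk₀
      simp [List.count_append, List.count_cons] at hk₀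
      omega
    · exfalso
      rw [hstep, hget] at hk₀
      simp [List.count_append, List.count_cons] at hk₀
      omega
    · rfl
  have heqprev : (t.take (k₀-1)).count Step.D = (t.take (k₀-1)).count Step.U := by
    rw [hstep, hgetD] at hk₀
    simp [List.count_append, List.count_cons] at hk₀
    omega
  have hsplitcnt : ∀ (j : ℕ) (s : Step),
      (t.take (k₀ + j)).count s = (t.take k₀).count s + ((t.drop k₀).take j).count s := by
    intro j s
    have e : t.take (k₀ + j) = t.take k₀ ++ (t.drop k₀).take j := by
      rw [List.take_drop]
      conv_lhs => rw [← List.take_append_drop k₀ (t.take (k₀+j))]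
      congr 1
      rw [List.take_take, min_eq_left (by omega)]
    rw [e, List.count_append]
  refine ⟨t.take (k₀ - 1), t.drop k₀, ?_, ⟨?_, ?_⟩, ⟨?_, ?_⟩⟩
  · conv_lhs => rw [← List.take_append_drop (k₀-1) t]
    congr 1
    rw [List.drop_eq_getElem_cons (by omega : k₀ - 1 < t.length), hgetD,
      show k₀ - 1 + 1 = k₀ by omega]
  · intro j
    rw [List.take_take]
    rcases le_or_gt j (k₀-1) with hc | hc
    · rw [min_eq_left hc]
      have h1 := hmin j (by omega)
      have h2 := hpre j
      omega
    · rw [min_eq_right (by omega)]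
      omega
  · exact heqprev.symm
  · intro j
    have hU := hsplitcnt j Step.U
    have hD := hsplitcnt j Step.D
    have h1 := hpre (k₀ + j)
    omega
  · have htot := h.2
    simp [List.count_cons] at htot
    have hU := hsplitcnt t.length Step.U
    have hD := hsplitcnt t.length Step.D
    rw [List.take_of_length_le (show t.length ≤ k₀ + t.length by omega),
      List.take_of_length_le (show (t.drop k₀).length ≤ t.length by simp)] at hU hD
    omega

lemma decomp_len_ne {m n : List Step} (m' n' : List Step)
    (hm : IsMotzkin m) (hn : IsMotzkin n)
    (h : m ++ Step.D :: m' = n ++ Step.D :: n') (hlt : m.length < n.length) : False := by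
  have htake : n.take (m.length + 1) = m ++ [Step.D] := by
    have := congrArg (List.take (m.length + 1)) h
    rw [List.take_append, List.take_of_length_le (by omega),
      List.take_cons (by omega), List.take_append_of_le_length (by omega)] at this
    simp only [Nat.add_sub_cancel_left] at this
    rw [← this]
    simp
  have := hn.1 (m.length + 1)
  rw [htake] at this
  simp [List.count_append, List.count_cons] at this
  have := hm.2
  omega

lemma decomp_unique {m n m' n' : List Step} (hm : IsMotzkin m) (hn : IsMotzkin n)
    (h : m ++ Step.D :: m' = n ++ Step.D :: n') : m = n ∧ m' = n' := by
  have hlen : m.length = n.length := by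
    rcases lt_trichotomy m.length n.length with hc | hc | hc
    · exact absurd (decomp_len_ne m' n' hm hn h hc) (by simp)
    · exact hc
    · exact absurd (decomp_len_ne n' m' hn hm h.symm hc) (by simp)
  have hmn : m = n := by
    have := congrArg (List.take m.length) h
    rwa [List.take_left, hlen, List.take_left] at this
  subst hmn
  exact ⟨rfl, by simpa using List.append_cancel_left h⟩

lemma motzkin_nil : IsMotzkin ([] : List Step) := ⟨by simp, rfl⟩

lemma motzkin_cons_H {l : List Step} : IsMotzkin (Step.H :: l) ↔ IsMotzkin l := by
  constructor
  · intro h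
    constructor
    · intro k
      have := h.1 (k + 1)
      rw [List.take_cons (by omega)] at this
      simpa [List.count_cons] using this
    · have := h.2
      simpa [List.count_cons] using this
  · intro h
    constructor
    · intro k
      rcases Nat.eq_zero_or_pos k with rfl | hk
      · simp
      rw [List.take_cons (by omega)]
      simpa [List.count_cons] using h.1 (k - 1)
    · simpa [List.count_cons] using h.2
  
lemma not_motzkin_cons_D (t : List Step) : ¬ IsMotzkin (Step.D :: t) := by
  intro h
  have := h.1 1
  simp [List.count_cons] at this

lemma motzkin_replicate_H (r : ℕ) : IsMotzkin (List.replicate r Step.H) :=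
  ⟨fun k => by simp [List.take_replicate, List.count_replicate],
    by simp [List.count_replicate]⟩

lemma plateau_of_no_U {r : ℕ} {l : List Step} (h : Step.U ∉ l) : plateauCountR r l = 0 := by
  rw [plateauCountR, Finset.card_eq_zero, Finset.filter_eq_empty_iff]
  intro i _ heq
  apply h
  have : Step.U ∈ (l.drop i).take (r+2) := by rw [heq]; simp [pat]
  exact (List.drop_subset i l) ((List.take_subset _ _) this)

lemma plateau_replicate_H (r' r : ℕ) : plateauCountR r' (List.replicate r Step.H) = 0 :=
  plateau_of_no_U (by simp [List.mem_replicate])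

lemma plateau_cons_H (r : ℕ) (l : List Step) :
    plateauCountR r (Step.H :: l) = plateauCountR r l := by
  rw [plateau_cons, if_neg, zero_add]
  rw [List.take_cons (by omega), pat]
  simp

lemma card_rec (r j : ℕ) :
    (A r (j+2)).card + (if r ≤ j then (A r (j-r)).card else 0)
      = (A r (j+1)).card + ∑ i ∈ Finset.range (j+1), (A r i).card * (A r (j-i)).card := by
  classical
  set AH := (A r (j+2)).filter (fun l => l.head? = some Step.H) with hAH
  set AU := (A r (j+2)).filter (fun l => ¬ l.head? = some Step.H) with hAU
  have hsplit : (A r (j+2)).card = AH.card + AU.card :=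
    (Finset.card_filter_add_card_filter_not _).symm
  -- AH ↔ A r (j+1)
  have hAHcard : AH.card = (A r (j+1)).card := by
    apply Finset.card_bij (fun l _ => l.tail)
    · intro l hl
      rw [hAH, Finset.mem_filter, mem_A] at hl
      obtain ⟨⟨hlen, hmot, hpl⟩, hhead⟩ := hl
      cases l with
      | nil => simp at hlen
      | cons x t =>
        simp only [List.head?_cons, Option.some.injEq] at hhead
        subst hhead
        rw [mem_A]
        refine ⟨by simpa using hlen, motzkin_cons_H.1 hmot, ?_⟩
        rw [List.tail_cons, ← plateau_cons_H r t]
        exact hpl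
    · intro a ha b hb hab
      rw [hAH, Finset.mem_filter, mem_A] at ha hb
      cases a with
      | nil => simp at ha
      | cons x t =>
        cases b with
        | nil => simp at hb
        | cons y u =>
          simp only [List.head?_cons, Option.some.injEq] at ha hb
          simp only [List.tail_cons] at hab
          rw [ha.2, hb.2, hab]
    · intro b hb
      refine ⟨Step.H :: b, ?_, by simp⟩
      rw [mem_A] at hb
      rw [hAH, Finset.mem_filter, mem_A]
      exact ⟨⟨by simp [hb.1], motzkin_cons_H.2 hb.2.1,
        by simp [plateau_cons_H, hb.2.2]⟩, by simp⟩
  -- sigma set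
  set S := (Finset.range (j+1)).sigma (fun i => A r i ×ˢ A r (j - i)) with hS
  have hScard : S.card = ∑ i ∈ Finset.range (j+1), (A r i).card * (A r (j-i)).card := by
    rw [hS, Finset.card_sigma]
    exact Finset.sum_congr rfl (fun i _ => Finset.card_product _ _)
  set Dbad := S.filter (fun x => x.2.1 = List.replicate r Step.H) with hDbad
  set Dgood := S.filter (fun x => ¬ x.2.1 = List.replicate r Step.H) with hDgood
  have hDsplit : S.card = Dbad.card + Dgood.card :=
    (Finset.card_filter_add_card_filter_not _).symm
  have memS : ∀ x : (_ : ℕ) × List Step × List Step, x ∈ S ↔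
      x.1 < j + 1 ∧ x.2.1 ∈ A r x.1 ∧ x.2.2 ∈ A r (j - x.1) := by
    intro x
    rw [hS, Finset.mem_sigma, Finset.mem_product, Finset.mem_range]
  -- Dgood ↔ AU
  have memA' : ∀ {n : ℕ} {l : List Step}, l ∈ A r n →
      l.length = n ∧ IsMotzkin l ∧ plateauCountR r l = 0 := fun h => mem_A.1 h
  have hDgoodcard : Dgood.card = AU.card := by
    apply Finset.card_bij (fun x _ => Step.U :: x.2.1 ++ Step.D :: x.2.2)
    · rintro ⟨i, m, m'⟩ hx
      rw [hDgood, Finset.mem_filter, memS] at hx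
      dsimp only at hx
      obtain ⟨⟨hi, hm, hm'⟩, hne⟩ := hx
      obtain ⟨hml, hmm, hmp⟩ := memA' hm
      obtain ⟨hml', hmm', hmp'⟩ := memA' hm'
      rw [hAU, Finset.mem_filter, mem_A]
      refine ⟨⟨by simp [hml, hml']; omega, motzkin_UmD hmm hmm', ?_⟩, by simp⟩
      rw [plateau_UmD r m' hmm, hmp, hmp', if_neg hne]
    · rintro ⟨i, m, m'⟩ hx ⟨i', n, n'⟩ hy hxy
      rw [hDgood, Finset.mem_filter, memS] at hx hy
      dsimp only at hx hy
      obtain ⟨⟨hi, hm, hm'⟩, hne⟩ := hx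
      obtain ⟨⟨hi2, hn, hn'⟩, hne2⟩ := hy
      simp only [List.cons_append, List.cons.injEq, true_and] at hxy
      obtain ⟨rfl, rfl⟩ := decomp_unique (memA' hm).2.1 (memA' hn).2.1 hxy
      have : i = i' := by rw [← (memA' hm).1, ← (memA' hn).1]
      subst this
      rfl
    · intro b hb
      rw [hAU, Finset.mem_filter, mem_A] at hb
      obtain ⟨⟨hlen, hmot, hpl⟩, hhead⟩ := hb
      cases b with
      | nil => simp at hlen
      | cons x t =>
        have hxU : x = Step.U := by
          cases x
          · rfl
          · simp at hhead
          · exact absurd hmot (not_motzkin_cons_D t)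
        subst hxU
        obtain ⟨m, m', rfl, hmm, hmm'⟩ := motzkin_decomp hmot
        have hpl2 := plateau_UmD r m' hmm
        have hple : plateauCountR r (Step.U :: m ++ Step.D :: m') = 0 := hpl
        rw [hple] at hpl2
        have hmne : ¬ m = List.replicate r Step.H := by
          intro hcon
          rw [if_pos hcon] at hpl2
          omega
        have hpm : plateauCountR r m = 0 := by
          rcases Nat.eq_zero_or_pos (plateauCountR r m) with h0 | h0
          · exact h0
          · exfalso; rw [if_neg hmne] at hpl2; omega
        have hpm' : plateauCountR r m' = 0 := by
          rcases Nat.eq_zero_or_pos (plateauCountR r m') with h0 | h0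
          · exact h0
          · exfalso; rw [if_neg hmne] at hpl2; omega
        have hlen2 : m.length + m'.length = j := by
          simp at hlen; omega
        refine ⟨⟨m.length, m, m'⟩, ?_, rfl⟩
        rw [hDgood, Finset.mem_filter, memS]
        dsimp only
        exact ⟨⟨by omega, mem_A.2 ⟨rfl, hmm, hpm⟩,
          mem_A.2 ⟨by omega, hmm', hpm'⟩⟩, hmne⟩
  have hDbadcard : Dbad.card = (if r ≤ j then (A r (j-r)).card else 0) := by
    rcases le_or_gt r j with hc | hc
    · rw [if_pos hc]
      apply Finset.card_bij (fun x _ => x.2.2)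
      · rintro ⟨i, m, m'⟩ hx
        rw [hDbad, Finset.mem_filter, memS] at hx
        dsimp only at hx
        obtain ⟨⟨hi, hm, hm'⟩, hrep⟩ := hx
        have : i = r := by
          have := (memA' hm).1
          rw [hrep] at this
          simp at this
          omega
        subst this
        exact hm'
      · rintro ⟨i, m, m'⟩ hx ⟨i', n, n'⟩ hy hxy
        rw [hDbad, Finset.mem_filter, memS] at hx hy
        dsimp only at hx hy
        obtain ⟨⟨hi, hm, hm'⟩, hrep⟩ := hx
        obtain ⟨⟨hi2, hn, hn'⟩, hrep2⟩ := hy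
        have e1 : i = r := by
          have := (memA' hm).1; rw [hrep] at this; simp at this; omega
        have e2 : i' = r := by
          have := (memA' hn).1; rw [hrep2] at this; simp at this; omega
        subst e1; subst e2
        simp only at hxy
        rw [hrep, hrep2, hxy]
      · intro m' hm'
        refine ⟨⟨r, List.replicate r Step.H, m'⟩, ?_, rfl⟩
        rw [hDbad, Finset.mem_filter, memS]
        dsimp only
        exact ⟨⟨by omega, mem_A.2 ⟨by simp, motzkin_replicate_H r,
          plateau_replicate_H r r⟩, hm'⟩, rfl⟩
    · rw [if_neg (by omega)]
      rw [Finset.card_eq_zero, Finset.eq_empty_iff_forall_notMem]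
      rintro ⟨i, m, m'⟩ hx
      rw [hDbad, Finset.mem_filter, memS] at hx
      dsimp only at hx
      obtain ⟨⟨hi, hm, hm'⟩, hrep⟩ := hx
      have := (memA' hm).1
      rw [hrep] at this
      simp at this
      omega
  omega

lemma card_A_zero (r : ℕ) : (A r 0).card = 1 := by
  have : A r 0 = {[]} := by
    apply Finset.eq_singleton_iff_unique_mem.2
    constructor
    · exact mem_A.2 ⟨rfl, motzkin_nil, plateau_nil r⟩
    · intro l hl
      have := (mem_A.1 hl).1
      exact List.length_eq_zero_iff.1 this
  rw [this]; rfl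

lemma card_A_one (r : ℕ) : (A r 1).card = 1 := by
  have : A r 1 = {[Step.H]} := by
    apply Finset.eq_singleton_iff_unique_mem.2
    constructor
    · refine mem_A.2 ⟨rfl, motzkin_cons_H.2 motzkin_nil, ?_⟩
      rw [plateau_cons_H]; exact plateau_nil r
    · intro l hl
      obtain ⟨hlen, hmot, _⟩ := mem_A.1 hl
      cases l with
      | nil => simp at hlen
      | cons x t =>
        have ht : t = [] := by simpa using hlen
        subst ht
        cases x
        · exfalso
          have := hmot.2
          simp [List.count_cons] at this
        · rfl
        · exact absurd hmot (not_motzkin_cons_D [])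
  rw [this]; rfl


open PowerSeries in
theorem plateauR_free_gf (r : ℕ) (hr : 1 ≤ r)
    (F : PowerSeries ℚ) (hF : F = PowerSeries.mk fun n => (cR r n 0 : ℚ)) :
    F = 1 + X * F + X ^ 2 * F * (F - X ^ r) ∧
      (2 * X ^ 2 * F - (1 - X + X ^ (r + 2))) ^ 2 = (1 - X + X ^ (r + 2)) ^ 2 - 4 * X ^ 2 := by
  have hc : ∀ n : ℕ, (coeff n) F = ((A r n).card : ℚ) := by
    intro n
    rw [hF, coeff_mk, cR_eq_card]
  have h1 : F = 1 + X * F + X ^ 2 * F * (F - X ^ r) := by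
    have hrw : 1 + X * F + X ^ 2 * F * (F - X ^ r)
        = 1 + X * F + X ^ 2 * (F * F - F * X ^ r) := by ring
    rw [hrw]
    ext n
    rw [map_add, map_add, coeff_one, coeff_X_pow_mul']
    match n with
    | 0 =>
      simp only [if_pos rfl, if_neg (by omega : ¬ 2 ≤ 0)]
      rw [hc 0, card_A_zero]
      have : (coeff 0) (X * F) = 0 := by
        rw [coeff_zero_eq_constantCoeff]
        simp
      rw [this]
      norm_num
    | 1 =>
      rw [coeff_succ_X_mul, if_neg (by omega), if_neg (by omega)]
      rw [hc 1, hc 0, card_A_zero, card_A_one]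
      norm_num
    | (j+2) =>
      rw [coeff_succ_X_mul, if_neg (by omega), if_pos (by omega)]
      have harith : j + 2 - 2 = j := by omega
      rw [harith, map_sub, coeff_mul_X_pow', PowerSeries.coeff_mul,
        Finset.Nat.sum_antidiagonal_eq_sum_range_succ_mk]
      simp only [hc]
      have hQ : ((A r (j+2)).card : ℚ) + (if r ≤ j then ((A r (j-r)).card : ℚ) else 0)
          = ((A r (j+1)).card : ℚ)
            + ∑ k ∈ Finset.range (j+1), ((A r k).card : ℚ) * ((A r (j-k)).card : ℚ) := by
        exact_mod_cast card_rec r j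
      rcases le_or_gt r j with hcase | hcase
      · rw [if_pos hcase] at hQ ⊢
        linarith [hQ]
      · rw [if_neg (by omega)] at hQ ⊢
        linarith [hQ]
  refine ⟨h1, ?_⟩
  linear_combination (-4 * (X:PowerSeries ℚ)^2) * h1
end
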